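/- arXiv:2509.03268 — 5 statements merged into one kernel-verified Lean document; each statement's English description precedes it below -/
import Mathlib

section
/- On the real line with the asymmetric distance d(x,y) = y−x for x ≤ y and d(x,y) = 1 for x > y, the curve γ(t) = t for t ∈ [0,1] is forward absolutely continuous but discontinuous with respect to the symmetrized topology; in fact, the symmetrized topology on (ℝ,d) is discrete. -/
open MeasureTheory

/-- The asymmetric distance on `ℝ`: `d(x,y) = y - x` for `x ≤ y`, and `d(x,y) = 1` for
`x > y`. -/
noncomputable def dAsym : ℝ → ℝ → ℝ := fun x y => if x ≤ y then y - x else 1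

/-- The symmetrized metric `d̂(x,y) = (d(x,y) + d(y,x))/2`. -/
noncomputable def dAsymHat : ℝ → ℝ → ℝ := fun x y => (dAsym x y + dAsym y x) / 2

/-- The topology on `ℝ` induced by the symmetrized metric `d̂`. -/
noncomputable def symTop : TopologicalSpace ℝ :=
  TopologicalSpace.generateFrom {s : Set ℝ | ∃ x r, 0 < r ∧ s = {y | dAsymHat x y < r}}

/-! For `x ≠ y` one of `d(x,y)`, `d(y,x)` equals `1`, so `d̂(x,y) ≥ 1/2` and the `d̂`-balls of
radius `1/2` are singletons: the symmetrized topology is discrete. The curve `γ(t) = t` is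
forward absolutely continuous with density `1`, but it cannot be continuous into a discrete
space, since `[0,1]` is connected and `γ` is not constant. -/

lemma dAsym_of_le {x y : ℝ} (h : x ≤ y) : dAsym x y = y - x := if_pos h

lemma half_le_dAsymHat_of_ne {x y : ℝ} (h : x ≠ y) : 1 / 2 ≤ dAsymHat x y := by
  rcases h.lt_or_gt with hxy | hyx
  · rw [dAsymHat, dAsym_of_le hxy.le, dAsym, if_neg (not_le.2 hxy)]
    linarith
  · rw [dAsymHat, dAsym_of_le hyx.le, dAsym, if_neg (not_le.2 hyx)]
    linarith

lemma setOf_dAsymHat_lt_half (x : ℝ) : {y | dAsymHat x y < 1 / 2} = {x} := by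
  ext y
  refine ⟨fun hy => by_contra fun hne => (half_le_dAsymHat_of_ne (Ne.symm hne)).not_gt hy, ?_⟩
  rintro rfl
  simp [dAsymHat, dAsym]

lemma symTop_eq_bot : symTop = ⊥ := by
  refine eq_bot_of_singletons_open fun x => ?_
  rw [← setOf_dAsymHat_lt_half x]
  exact TopologicalSpace.GenerateOpen.basic _ ⟨x, 1 / 2, one_half_pos, rfl⟩

lemma not_continuous_coe_Icc_bot {a b : ℝ} (hab : a < b) :
    ¬ @Continuous (Set.Icc a b) ℝ _ ⊥ (fun t => (t : ℝ)) := fun hcont =>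
  have : PreconnectedSpace (Set.Icc a b) := Subtype.preconnectedSpace isPreconnected_Icc
  hab.ne <| @PreconnectedSpace.constant _ _ _ ⊥ (discreteTopology_bot ℝ) this _ hcont
    ⟨a, Set.left_mem_Icc.2 hab.le⟩ ⟨b, Set.right_mem_Icc.2 hab.le⟩

/-- On the real line with the asymmetric distance `d(x,y) = y−x` for `x ≤ y`
and `d(x,y) = 1` for `x > y`, the curve `γ(t) = t`, `t ∈ [0,1]`, is forward absolutely
continuous but discontinuous with respect to the symmetrized topology; in fact, the
symmetrized topology is discrete. -/
theorem stmt_6 :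
    (∃ f : ℝ → ℝ, (∀ s, 0 ≤ f s) ∧ IntegrableOn f (Set.Icc (0 : ℝ) 1) ∧
      ∀ t₁ t₂ : ℝ, t₁ ∈ Set.Icc (0 : ℝ) 1 → t₂ ∈ Set.Icc (0 : ℝ) 1 → t₁ ≤ t₂ →
        dAsym t₁ t₂ ≤ ∫ s in t₁..t₂, f s) ∧
    symTop = ⊥ ∧
    ¬ @Continuous (Set.Icc (0 : ℝ) 1) ℝ _ symTop (fun t => (t : ℝ)) := by
  refine ⟨⟨fun _ => 1, fun _ => zero_le_one, integrableOn_const (by simp) (by simp),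
    fun t₁ t₂ _ _ h => ?_⟩, symTop_eq_bot, ?_⟩
  · simp [dAsym_of_le h]
  · rw [symTop_eq_bot]
    exact not_continuous_coe_Icc_bot one_pos
end

section
/- For every forward Lipschitz function f on a forward extended metric space, the positive part f⁺ and the function −f⁻ are forward Lipschitz, and the ascending slopes decompose as |D⁺f| = |D⁺f⁺| + |D⁺(−f⁻)| pointwise. -/
open Filter

/-- The reversibility `λ_d(A)` of a set `A`. -/
noncomputable def reversibility {X : Type*} (d : X → X → ENNReal) (A : Set X) : ENNReal :=
  sInf {l : ENNReal | 1 ≤ l ∧ ∀ x ∈ A, ∀ y ∈ A, d x y ≤ l * d y x}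

/-- The topology `T̂ = T₊` of a forward extended metric space. -/
noncomputable def asymTop {X : Type*} (d : X → X → ENNReal) : TopologicalSpace X :=
  TopologicalSpace.generateFrom
    ({s : Set X | ∃ x r, 0 < r ∧ s = {y | d x y < r}} ∪
     {s : Set X | ∃ x r, 0 < r ∧ s = {y | d y x < r}})

/-- The ascending slope `|D⁺f|(x)` of a real-valued function. -/
noncomputable def ascSlope {X : Type*} (d : X → X → ENNReal) (f : X → ℝ) (x : X) :
    ENNReal :=
  Filter.limsup (fun y => ENNReal.ofReal (f y - f x) / d x y)
    (@nhdsWithin X (asymTop d) x {x}ᶜ)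

/-- Forward Lipschitz with constant `C`. -/
def FwdLipschitzWith {X : Type*} (d : X → X → ENNReal) (C : ℝ) (f : X → ℝ) : Prop :=
  ∀ x y : X, ENNReal.ofReal (f y - f x) ≤ ENNReal.ofReal C * d x y

/-!
Post-composition with the monotone, 1-Lipschitz maps `t ↦ max t 0` and `t ↦ min t 0` can only
shrink positive increments, which gives the Lipschitz bounds. For the slopes, split on the sign
of `f x`. If `f x ≥ 0`, the increments of `f⁺` at `x` have the same positive part as those of
`f`, while `-f⁻` never rises above its value `0` at `x`. If `f x < 0`, a forward Lipschitz
function is upper semicontinuous for the topology `T₊`, so `f < 0` near `x`; there `-f⁻ = f`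
and `f⁺ = 0`.
-/

open Topology

section

variable {X : Type*} {d : X → X → ENNReal}

lemma FwdLipschitzWith.comp_of_monotone {C : ℝ} {f : X → ℝ} (hf : FwdLipschitzWith d C f)
    {g : ℝ → ℝ} (hg_mono : Monotone g) (hg_lip : LipschitzWith 1 g) :
    FwdLipschitzWith d C (g ∘ f) := by
  intro x y
  refine le_trans ?_ (hf x y)
  rcases le_total (f x) (f y) with hxy | hyx
  · apply ENNReal.ofReal_le_ofReal
    calc g (f y) - g (f x) ≤ dist (g (f y)) (g (f x)) := le_abs_self _
      _ ≤ dist (f y) (f x) := by simpa using hg_lip.dist_le_mul (f y) (f x)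
      _ = f y - f x := abs_of_nonneg (sub_nonneg.2 hxy)
  · simp [ENNReal.ofReal_of_nonpos (sub_nonpos.2 (hg_mono hyx))]

lemma tendsto_asymTop_nhds_zero {x : X} (hx : d x x = 0) :
    Tendsto (d x) (@nhds X (asymTop d) x) (𝓝 0) := by
  let := asymTop d
  refine ENNReal.tendsto_nhds_zero.2 fun ε hε => ?_
  have hball : IsOpen {y | d x y < ε} :=
    TopologicalSpace.isOpen_generateFrom_of_mem (Or.inl ⟨x, ε, hε, rfl⟩)
  filter_upwards [hball.mem_nhds (show d x x < ε by rwa [hx])] with y hy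
  exact hy.le

lemma FwdLipschitzWith.upperSemicontinuousAt {C : ℝ} {f : X → ℝ}
    (hf : FwdLipschitzWith d C f) {x : X} (hx : d x x = 0) :
    @UpperSemicontinuousAt X ℝ (asymTop d) _ f x := by
  intro a ha
  have hrise : Tendsto (fun y => ENNReal.ofReal C * d x y) (@nhds X (asymTop d) x) (𝓝 0) := by
    simpa using ENNReal.Tendsto.const_mul (tendsto_asymTop_nhds_zero hx)
      (Or.inr ENNReal.ofReal_ne_top)
  filter_upwards [hrise.eventually_lt_const (ENNReal.ofReal_pos.2 (sub_pos.2 ha))] with y hy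
  have := ENNReal.ofReal_lt_ofReal_iff'.1 ((hf x y).trans_lt hy)
  linarith [this.1]

section Slope

variable {f g : X → ℝ} {x : X}

lemma ascSlope_congr
    (h : ∀ᶠ y in @nhdsWithin X (asymTop d) x {x}ᶜ,
      ENNReal.ofReal (f y - f x) = ENNReal.ofReal (g y - g x)) :
    ascSlope d f x = ascSlope d g x :=
  limsup_congr (h.mono fun y hy => by rw [hy])

lemma ascSlope_eq_zero_of_eventually_le
    (h : ∀ᶠ y in @nhdsWithin X (asymTop d) x {x}ᶜ, f y ≤ f x) :
    ascSlope d f x = 0 :=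
  le_antisymm
    (limsup_le_of_le (by isBoundedDefault) (h.mono fun y hy => by
      simp [ENNReal.ofReal_of_nonpos (sub_nonpos.2 hy)]))
    zero_le

lemma ascSlope_max_zero_of_nonneg (hx : 0 ≤ f x) :
    ascSlope d (fun y => max (f y) 0) x = ascSlope d f x := by
  refine ascSlope_congr (Eventually.of_forall fun y => ?_)
  rw [max_eq_left hx]
  rcases le_total (f y) 0 with hy | hy
  · rw [max_eq_right hy, ENNReal.ofReal_of_nonpos (by linarith),
      ENNReal.ofReal_of_nonpos (by linarith)]
  · rw [max_eq_left hy]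

lemma ascSlope_min_zero_of_nonneg (hx : 0 ≤ f x) :
    ascSlope d (fun y => min (f y) 0) x = 0 :=
  ascSlope_eq_zero_of_eventually_le
    (Eventually.of_forall fun _ => (min_le_right _ _).trans (le_min hx le_rfl))

lemma ascSlope_max_zero_of_eventually_nonpos
    (h : ∀ᶠ y in @nhdsWithin X (asymTop d) x {x}ᶜ, f y ≤ 0) :
    ascSlope d (fun y => max (f y) 0) x = 0 :=
  ascSlope_eq_zero_of_eventually_le
    (h.mono fun _ hy => (max_eq_right hy).trans_le (le_max_right _ _))

lemma ascSlope_min_zero_of_eventually_nonpos (hx : f x ≤ 0)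
    (h : ∀ᶠ y in @nhdsWithin X (asymTop d) x {x}ᶜ, f y ≤ 0) :
    ascSlope d (fun y => min (f y) 0) x = ascSlope d f x :=
  ascSlope_congr (h.mono fun y hy => by rw [min_eq_left hy, min_eq_left hx])

end Slope

end

theorem stmt_12_general {X : Type*} (d : X → X → ENNReal)
    (hzero : ∀ x y : X, d x y = 0 ↔ x = y)
    (f : X → ℝ) (C : ℝ) (hLip : FwdLipschitzWith d C f) :
    FwdLipschitzWith d C (fun y => max (f y) 0) ∧
    FwdLipschitzWith d C (fun y => min (f y) 0) ∧
    ∀ x : X, ascSlope d f x =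
      ascSlope d (fun y => max (f y) 0) x + ascSlope d (fun y => min (f y) 0) x := by
  refine ⟨hLip.comp_of_monotone (fun _ _ h => max_le_max h le_rfl) (LipschitzWith.id.max_const 0),
    hLip.comp_of_monotone (fun _ _ h => min_le_min h le_rfl) (LipschitzWith.id.min_const 0),
    fun x => ?_⟩
  rcases le_or_gt 0 (f x) with hx | hx
  · rw [ascSlope_max_zero_of_nonneg hx, ascSlope_min_zero_of_nonneg hx, add_zero]
  · have hneg : ∀ᶠ y in @nhdsWithin X (asymTop d) x {x}ᶜ, f y ≤ 0 :=
      ((hLip.upperSemicontinuousAt ((hzero x x).2 rfl) 0 hx).filter_mono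
        (@nhdsWithin_le_nhds X (asymTop d) x _)).mono fun _ hy => hy.le
    rw [ascSlope_max_zero_of_eventually_nonpos hneg,
      ascSlope_min_zero_of_eventually_nonpos hx.le hneg, zero_add]

/-- For every forward Lipschitz function `f` on a forward extended metric
space, the positive part `f⁺` and the function `−f⁻` are forward Lipschitz, and the
ascending slopes decompose as `|D⁺f| = |D⁺f⁺| + |D⁺(−f⁻)|` pointwise. -/
theorem stmt_12 {X : Type*} (d : X → X → ENNReal)
    (hzero : ∀ x y : X, d x y = 0 ↔ x = y)
    (htri : ∀ x y z : X, d x z ≤ d x y + d y z)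
    (htheta : ∃ Θ : X → ℝ → ℝ, (∀ x r, 0 < r → 1 ≤ Θ x r) ∧
      (∀ x, MonotoneOn (Θ x) (Set.Ioi (0 : ℝ))) ∧
      (∀ x r, 0 < r →
        reversibility d {y | d x y < ENNReal.ofReal r} ≤ ENNReal.ofReal (Θ x r)))
    (f : X → ℝ) (C : ℝ) (hC : 0 ≤ C) (hLip : FwdLipschitzWith d C f) :
    FwdLipschitzWith d C (fun y => max (f y) 0) ∧
    FwdLipschitzWith d C (fun y => min (f y) 0) ∧
    ∀ x : X, ascSlope d f x =
      ascSlope d (fun y => max (f y) 0) x + ascSlope d (fun y => min (f y) 0) x :=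
  stmt_12_general d hzero f C hLip
end

section
/- If f is forward Lipschitz on a forward extended metric space, then the ascending slope |D⁺f| is a strong upper gradient of f: for every forward absolutely continuous curve γ: [0,1] → X and all 0 ≤ t₁ < t₂ ≤ 1, f(γ(t₂)) − f(γ(t₁)) ≤ ∫_{t₁}^{t₂} |D⁺f|(γ(s)) |γ'₊|(s) ds. -/
open Filter MeasureTheory

/-- The forward metric derivative `|γ'₊|(s) = lim_{h→0⁺} d(γ(s),γ(s+h))/h`
(as a right-hand limsup, which coincides with the limit wherever it exists). -/
noncomputable def fwdMetricDeriv {X : Type*} (d : X → X → ENNReal) (γ : ℝ → X) (s : ℝ) :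
    ENNReal :=
  Filter.limsup (fun h : ℝ => d (γ s) (γ (s + h)) / ENNReal.ofReal h)
    (nhdsWithin 0 (Set.Ioi (0 : ℝ)))

/-! Along the curve, `F = f ∘ γ` satisfies `F t - F s ≤ C ∫ₛᵗ g`, so `C ∫ g - F` is monotone.
Hence `F` is differentiable a.e., and since the integral of the derivative of a monotone function
is at most its increment, `F t₂ - F t₁ ≤ ∫ F'`. At almost every `s` the right difference quotient
of `F` factors as `(f (γ (s+h)) - f (γ s)) / d(γ s, γ (s+h))` times `d(γ s, γ (s+h)) / h`, whose
limsups are at most `|D⁺f|(γ s)` and `|γ'₊|(s)`. For the first bound, `γ (s+h)` must converge to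
`γ s` in the symmetrized topology `asymTop d`; the backward distances tend to zero because small
forward balls have finite reversibility. -/

open Set Topology

section ForwardMetric

variable {X α : Type*} {d : X → X → ENNReal} {l : Filter α} {u : α → X} {x : X}

theorem tendsto_asymTop_of_tendsto_dist (htri : ∀ x y z : X, d x z ≤ d x y + d y z)
    (hfwd : Tendsto (fun a => d x (u a)) l (𝓝 0)) (hbwd : Tendsto (fun a => d (u a) x) l (𝓝 0)) :
    Tendsto u l (@nhds X (asymTop d) x) := by
  rw [asymTop, TopologicalSpace.nhds_generateFrom]
  simp only [tendsto_iInf, tendsto_principal]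
  rintro S ⟨hxS, ⟨z, r, -, rfl⟩ | ⟨z, r, -, rfl⟩⟩
  · have hzx : d z x < r := hxS
    filter_upwards [hfwd.eventually_lt_const (tsub_pos_iff_lt.2 hzx)] with a ha
    calc d z (u a) ≤ d z x + d x (u a) := htri _ _ _
      _ < d z x + (r - d z x) := ENNReal.add_lt_add_left (hzx.trans_le le_top).ne ha
      _ = r := add_tsub_cancel_of_le hzx.le
  · have hxz : d x z < r := hxS
    filter_upwards [hbwd.eventually_lt_const (tsub_pos_iff_lt.2 hxz)] with a ha
    calc d (u a) z ≤ d (u a) x + d x z := htri _ _ _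
      _ < (r - d x z) + d x z := ENNReal.add_lt_add_right (hxz.trans_le le_top).ne ha
      _ = r := tsub_add_cancel_of_le hxz.le

theorem tendsto_dist_swap_of_reversibility_ne_top (hxx : d x x = 0) {r : ENNReal} (hr : 0 < r)
    (hrev : reversibility d {y | d x y < r} ≠ ⊤) (hfwd : Tendsto (fun a => d x (u a)) l (𝓝 0)) :
    Tendsto (fun a => d (u a) x) l (𝓝 0) := by
  obtain ⟨m, ⟨-, hm⟩, hm_lt⟩ := sInf_lt_iff.1 (lt_top_iff_ne_top.2 hrev)
  have hbound : ∀ᶠ a in l, d (u a) x ≤ m * d x (u a) := by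
    filter_upwards [hfwd.eventually_lt_const hr] with a ha
    exact hm _ ha x (hxx.trans_lt hr)
  have hlim : Tendsto (fun a => m * d x (u a)) l (𝓝 0) := by
    simpa using ENNReal.Tendsto.const_mul hfwd (Or.inr hm_lt.ne)
  exact tendsto_of_tendsto_of_tendsto_of_le_of_le' tendsto_const_nhds hlim
    (Eventually.of_forall fun _ => zero_le) hbound

theorem limsup_le_ascSlope (f : X → ℝ) (hu : Tendsto u l (@nhds X (asymTop d) x)) :
    limsup (fun a => ENNReal.ofReal (f (u a) - f x) / d x (u a)) l ≤ ascSlope d f x := by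
  let := asymTop d
  calc limsup ((fun y => ENNReal.ofReal (f y - f x) / d x y) ∘ u) l
      ≤ limsup (fun y => ENNReal.ofReal (f y - f x) / d x y) (𝓝 x) := by
        rw [limsup_comp]; exact limsup_le_limsup_of_le hu
    _ ≤ ascSlope d f x := by
        rw [← nhdsNE_sup_pure, limsup_sup_filter]
        exact sup_le le_rfl (limsup_le_of_le (by isBoundedDefault) (eventually_pure.2 (by simp)))

theorem sub_le_mul_of_dist_le {f : X → ℝ} {C r : ℝ}
    (hC : 0 ≤ C) (hr : 0 ≤ r)
    (hLip : ∀ x y : X, ENNReal.ofReal (f y - f x) ≤ ENNReal.ofReal C * d x y) {y : X}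
    (hxy : d x y ≤ ENNReal.ofReal r) : f y - f x ≤ C * r := by
  refine (ENNReal.ofReal_le_ofReal_iff (mul_nonneg hC hr)).1 ((hLip x y).trans ?_)
  rw [ENNReal.ofReal_mul hC]
  gcongr

end ForwardMetric

section Curve

variable {X : Type*} {d : X → X → ENNReal} {γ : ℝ → X} {s : ℝ}

theorem ofReal_le_ascSlope_mul_fwdMetricDeriv {f : X → ℝ} {C L : ℝ}
    (hLip : ∀ x y : X, ENNReal.ofReal (f y - f x) ≤ ENNReal.ofReal C * d x y)
    (hγ : Tendsto (fun h => γ (s + h)) (𝓝[>] 0) (@nhds X (asymTop d) (γ s)))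
    (hfin : fwdMetricDeriv d γ s ≠ ⊤) (hdfin : ∀ᶠ h in 𝓝[>] 0, d (γ s) (γ (s + h)) ≠ ⊤)
    (hF : Tendsto (fun h => h⁻¹ * (f (γ (s + h)) - f (γ s))) (𝓝[>] 0) (𝓝 L)) :
    ENNReal.ofReal L ≤ ascSlope d f (γ s) * fwdMetricDeriv d γ s := by
  set q := fun h => ENNReal.ofReal (f (γ (s + h)) - f (γ s)) / d (γ s) (γ (s + h))
  have hfactor : ∀ᶠ h in 𝓝[>] 0, ENNReal.ofReal (h⁻¹ * (f (γ (s + h)) - f (γ s))) =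
      q h * (d (γ s) (γ (s + h)) / ENNReal.ofReal h) := by
    filter_upwards [hdfin, self_mem_nhdsWithin] with h hd (hh : 0 < h)
    -- where `d = 0` the convention `0 / 0 = 0` is harmless: forward Lipschitz kills the numerator
    have hq : q h * d (γ s) (γ (s + h)) = ENNReal.ofReal (f (γ (s + h)) - f (γ s)) :=
      ENNReal.div_mul_cancel'
        (fun h0 => le_zero_iff.1 (by simpa [h0] using hLip (γ s) (γ (s + h))))
        (fun htop => absurd htop hd)
    rw [← mul_div_assoc, hq, ENNReal.ofReal_mul (inv_nonneg.2 hh.le), ENNReal.ofReal_inv_of_pos hh,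
      mul_comm, div_eq_mul_inv]
  have hq_le : limsup q (𝓝[>] 0) ≤ ENNReal.ofReal C :=
    limsup_le_of_le (by isBoundedDefault)
      (Eventually.of_forall fun _ => ENNReal.div_le_of_le_mul (hLip _ _))
  calc ENNReal.ofReal L
      = limsup (fun h => ENNReal.ofReal (h⁻¹ * (f (γ (s + h)) - f (γ s)))) (𝓝[>] 0) :=
        (ENNReal.tendsto_ofReal hF).limsup_eq.symm
    _ = limsup (q * fun h => d (γ s) (γ (s + h)) / ENNReal.ofReal h) (𝓝[>] 0) :=
        limsup_congr hfactor
    _ ≤ limsup q (𝓝[>] 0) * fwdMetricDeriv d γ s :=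
        ENNReal.limsup_mul_le' (Or.inr hfin) (Or.inl (hq_le.trans_lt ENNReal.ofReal_lt_top).ne)
    _ ≤ ascSlope d f (γ s) * fwdMetricDeriv d γ s :=
        mul_le_mul_left (limsup_le_ascSlope f hγ) _

variable {G : ℝ → ℝ} {a : ℝ}

theorem tendsto_dist_of_le_of_hasDerivAt
    (hdom : ∀ᶠ h in 𝓝[>] 0, d (γ s) (γ (s + h)) ≤ ENNReal.ofReal (G (s + h) - G s))
    (hG : HasDerivAt G a s) : Tendsto (fun h => d (γ s) (γ (s + h))) (𝓝[>] 0) (𝓝 0) := by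
  have hcont : ContinuousAt (fun h => G (s + h) - G s) 0 :=
    (hG.continuousAt.comp_of_eq (continuous_const_add s).continuousAt (add_zero s)).sub_const _
  have hlim : Tendsto (fun h => ENNReal.ofReal (G (s + h) - G s)) (𝓝[>] 0) (𝓝 0) := by
    simpa using (ENNReal.tendsto_ofReal hcont.tendsto).mono_left nhdsWithin_le_nhds
  exact tendsto_of_tendsto_of_tendsto_of_le_of_le' tendsto_const_nhds hlim
    (Eventually.of_forall fun _ => zero_le) hdom

theorem fwdMetricDeriv_le_of_le_of_hasDerivAt
    (hdom : ∀ᶠ h in 𝓝[>] 0, d (γ s) (γ (s + h)) ≤ ENNReal.ofReal (G (s + h) - G s))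
    (hG : HasDerivAt G a s) : fwdMetricDeriv d γ s ≤ ENNReal.ofReal a := by
  rw [fwdMetricDeriv, ← (ENNReal.tendsto_ofReal hG.tendsto_slope_zero_right).limsup_eq]
  refine limsup_le_limsup ?_
  filter_upwards [hdom, self_mem_nhdsWithin] with h hh (hpos : 0 < h)
  rw [smul_eq_mul, ENNReal.ofReal_mul (inv_nonneg.2 hpos.le), ENNReal.ofReal_inv_of_pos hpos,
    mul_comm, ← div_eq_mul_inv]
  exact ENNReal.div_le_div_right hh _

theorem ofReal_le_ascSlope_mul_fwdMetricDeriv_of_hasDerivAt {f : X → ℝ} {C L : ℝ} {r : ENNReal}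
    (htri : ∀ x y z : X, d x z ≤ d x y + d y z) (hxx : d (γ s) (γ s) = 0) (hr : 0 < r)
    (hrev : reversibility d {y | d (γ s) y < r} ≠ ⊤)
    (hLip : ∀ x y : X, ENNReal.ofReal (f y - f x) ≤ ENNReal.ofReal C * d x y)
    (hdom : ∀ᶠ h in 𝓝[>] 0, d (γ s) (γ (s + h)) ≤ ENNReal.ofReal (G (s + h) - G s))
    (hG : HasDerivAt G a s) (hF : HasDerivAt (fun t => f (γ t)) L s) :
    ENNReal.ofReal L ≤ ascSlope d f (γ s) * fwdMetricDeriv d γ s := by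
  have hfwd := tendsto_dist_of_le_of_hasDerivAt hdom hG
  have hγ : Tendsto (fun h => γ (s + h)) (𝓝[>] 0) (@nhds X (asymTop d) (γ s)) :=
    tendsto_asymTop_of_tendsto_dist htri hfwd
      (tendsto_dist_swap_of_reversibility_ne_top hxx hr hrev hfwd)
  exact ofReal_le_ascSlope_mul_fwdMetricDeriv hLip hγ
    ((fwdMetricDeriv_le_of_le_of_hasDerivAt hdom hG).trans_lt ENNReal.ofReal_lt_top).ne
    (hdom.mono fun _ hh => ne_top_of_le_ne_top ENNReal.ofReal_ne_top hh) hF.tendsto_slope_zero_right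

end Curve

section IntervalIntegral

variable {F g : ℝ → ℝ} {C a b : ℝ}

theorem eventually_dist_le_integral_sub {X : Type*} {d : X → X → ENNReal} {γ : ℝ → X} {s : ℝ}
    (hg : IntervalIntegrable g volume a b) (hs : s ∈ Ioo a b)
    (hgd : ∀ x ∈ Icc a b, ∀ y ∈ Icc a b, x ≤ y →
      d (γ x) (γ y) ≤ ENNReal.ofReal (∫ t in x..y, g t)) :
    ∀ᶠ h in 𝓝[>] 0, d (γ s) (γ (s + h)) ≤
      ENNReal.ofReal ((∫ t in a..s + h, g t) - ∫ t in a..s, g t) := by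
  filter_upwards [Ioo_mem_nhdsGT (sub_pos.2 hs.2)] with h hh
  have hsh : s + h ∈ Icc a b := ⟨by linarith [hs.1, hh.1], by linarith [hh.2]⟩
  have hsI : s ∈ Icc a b := Ioo_subset_Icc_self hs
  rw [intervalIntegral.integral_interval_sub_left
    (hg.mono_set (uIcc_subset_uIcc left_mem_uIcc (Icc_subset_uIcc hsh)))
    (hg.mono_set (uIcc_subset_uIcc left_mem_uIcc (Icc_subset_uIcc hsI)))]
  exact hgd s hsI (s + h) hsh (by linarith [hh.1])

theorem monotoneOn_mul_integral_sub (hg : IntervalIntegrable g volume a b)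
    (hF : ∀ x ∈ Icc a b, ∀ y ∈ Icc a b, x ≤ y → F y - F x ≤ C * ∫ t in x..y, g t) :
    MonotoneOn (fun t => C * (∫ u in a..t, g u) - F t) (Icc a b) := by
  intro x hx y hy hxy
  have hinc := hF x hx y hy hxy
  rw [← intervalIntegral.integral_interval_sub_left
    (hg.mono_set (uIcc_subset_uIcc left_mem_uIcc (Icc_subset_uIcc hy)))
    (hg.mono_set (uIcc_subset_uIcc left_mem_uIcc (Icc_subset_uIcc hx))), mul_sub] at hinc
  dsimp only
  linarith

theorem sub_le_integral_mul_sub_deriv (hab : a ≤ b) (hg : IntervalIntegrable g volume a b)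
    (hφ : MonotoneOn (fun t => C * (∫ u in a..t, g u) - F t) (Icc a b)) :
    F b - F a ≤ ∫ t in a..b, (C * g t - deriv (fun t => C * (∫ u in a..t, g u) - F t) t) := by
  rw [← uIcc_of_le hab] at hφ
  rw [intervalIntegral.integral_sub (hg.const_mul C) hφ.intervalIntegrable_deriv,
    intervalIntegral.integral_const_mul]
  have hderiv := hφ.intervalIntegral_deriv_mem_uIcc.2.trans_eq
    (sup_eq_right.2 (sub_nonneg.2 (hφ left_mem_uIcc right_mem_uIcc hab)))
  simp only [intervalIntegral.integral_same, mul_zero, zero_sub, sub_neg_eq_add] at hderiv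
  linarith

theorem ofReal_intervalIntegral_le_setLIntegral {f : ℝ → ℝ} {k : ℝ → ENNReal}
    (hab : a ≤ b) (hf : IntervalIntegrable f volume a b)
    (hfk : ∀ᵐ s, s ∈ Ioo a b → ENNReal.ofReal (f s) ≤ k s) :
    ENNReal.ofReal (∫ s in a..b, f s) ≤ ∫⁻ s in Icc a b, k s := by
  rw [intervalIntegral.integral_of_le hab,
    integral_eq_lintegral_pos_part_sub_lintegral_neg_part hf.1,
    ← restrict_Ioo_eq_restrict_Ioc, ← restrict_Ioo_eq_restrict_Icc]
  calc ENNReal.ofReal (_ - _)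
      ≤ ∫⁻ s in Ioo a b, ENNReal.ofReal (f s) :=
        (ENNReal.ofReal_le_ofReal (sub_le_self _ ENNReal.toReal_nonneg)).trans
          ENNReal.ofReal_toReal_le
    _ ≤ ∫⁻ s in Ioo a b, k s := lintegral_mono_ae ((ae_restrict_iff' measurableSet_Ioo).2 hfk)

end IntervalIntegral

/-- If `f` is forward Lipschitz on a forward extended metric space, then the
ascending slope `|D⁺f|` is a strong upper gradient of `f`: for every forward absolutely
continuous curve `γ : [0,1] → X` and all `0 ≤ t₁ < t₂ ≤ 1`,
`f(γ(t₂)) − f(γ(t₁)) ≤ ∫_{t₁}^{t₂} |D⁺f|(γ(s)) |γ'₊|(s) ds`. -/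
theorem stmt_13 {X : Type*} (d : X → X → ENNReal)
    (hzero : ∀ x y : X, d x y = 0 ↔ x = y)
    (htri : ∀ x y z : X, d x z ≤ d x y + d y z)
    (htheta : ∃ Θ : X → ℝ → ℝ, (∀ x r, 0 < r → 1 ≤ Θ x r) ∧
      (∀ x, MonotoneOn (Θ x) (Set.Ioi (0 : ℝ))) ∧
      (∀ x r, 0 < r →
        reversibility d {y | d x y < ENNReal.ofReal r} ≤ ENNReal.ofReal (Θ x r)))
    (f : X → ℝ) (C : ℝ) (hC : 0 ≤ C)
    (hLip : ∀ x y : X, ENNReal.ofReal (f y - f x) ≤ ENNReal.ofReal C * d x y)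
    (γ : ℝ → X)
    (hγ : ∃ g : ℝ → ℝ, (∀ s, 0 ≤ g s) ∧ IntegrableOn g (Set.Icc (0 : ℝ) 1) ∧
      ∀ t₁ t₂ : ℝ, t₁ ∈ Set.Icc (0 : ℝ) 1 → t₂ ∈ Set.Icc (0 : ℝ) 1 → t₁ ≤ t₂ →
        d (γ t₁) (γ t₂) ≤ ENNReal.ofReal (∫ s in t₁..t₂, g s)) :
    ∀ t₁ t₂ : ℝ, t₁ ∈ Set.Icc (0 : ℝ) 1 → t₂ ∈ Set.Icc (0 : ℝ) 1 → t₁ < t₂ →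
      ENNReal.ofReal (f (γ t₂) - f (γ t₁)) ≤
        ∫⁻ s in Set.Icc t₁ t₂, ascSlope d f (γ s) * fwdMetricDeriv d γ s := by
  intro t₁ t₂ ht₁ ht₂ hlt
  obtain ⟨g, hg0, hgint, hgd⟩ := hγ
  obtain ⟨Θ, -, -, hΘ⟩ := htheta
  have hI : Icc t₁ t₂ ⊆ Icc 0 1 := Icc_subset_Icc ht₁.1 ht₂.2
  have hgd' x (hx : x ∈ Icc t₁ t₂) y (hy : y ∈ Icc t₁ t₂) := hgd x y (hI hx) (hI hy)
  have hg : IntervalIntegrable g volume t₁ t₂ :=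
    (hgint.mono_set (uIcc_of_le hlt.le ▸ hI)).intervalIntegrable
  set φ := fun t => C * (∫ u in t₁..t, g u) - f (γ t)
  have hφ : MonotoneOn φ (Icc t₁ t₂) := monotoneOn_mul_integral_sub hg fun x hx y hy hxy =>
    sub_le_mul_of_dist_le hC (intervalIntegral.integral_nonneg hxy fun t _ => hg0 t) hLip
      (hgd' x hx y hy hxy)
  have hpt : ∀ᵐ s, s ∈ Ioo t₁ t₂ →
      ENNReal.ofReal (C * g s - deriv φ s) ≤ ascSlope d f (γ s) * fwdMetricDeriv d γ s := by
    filter_upwards [hg.ae_hasDerivAt_integral, hφ.ae_differentiableWithinAt_of_mem]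
      with s hG hφs hs
    have hsI : s ∈ uIcc t₁ t₂ := uIcc_of_le hlt.le ▸ Ioo_subset_Icc_self hs
    have hG := hG hsI t₁ left_mem_uIcc
    have hφd := ((hφs (Ioo_subset_Icc_self hs)).differentiableAt
      (Icc_mem_nhds hs.1 hs.2)).hasDerivAt
    refine ofReal_le_ascSlope_mul_fwdMetricDeriv_of_hasDerivAt htri ((hzero _ _).2 rfl)
      (ENNReal.ofReal_pos.2 one_pos) (ne_top_of_le_ne_top ENNReal.ofReal_ne_top (hΘ _ 1 one_pos))
      hLip (eventually_dist_le_integral_sub hg hs hgd') hG ?_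
    simpa only [φ, Pi.sub_def, sub_sub_cancel] using (hG.const_mul C).sub hφd
  calc ENNReal.ofReal (f (γ t₂) - f (γ t₁))
      ≤ ENNReal.ofReal (∫ s in t₁..t₂, (C * g s - deriv φ s)) :=
        ENNReal.ofReal_le_ofReal (sub_le_integral_mul_sub_deriv hlt.le hg hφ)
    _ ≤ ∫⁻ s in Icc t₁ t₂, ascSlope d f (γ s) * fwdMetricDeriv d γ s :=
        ofReal_intervalIntegral_le_setLIntegral hlt.le
          ((hg.const_mul C).sub (uIcc_of_le hlt.le ▸ hφ).intervalIntegrable_deriv) hpt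
end

section
/- (Monotonicity of minimizing distances for the Hopf–Lax semigroup.) Let (X,τ,d) be a forward extended Polish space, f: X → (−∞,∞] proper, p ∈ (1,∞), and for t > 0 set Q_t f(y) = inf_x [f(x) + d(x,y)^p/(p t^{p−1})]. Define 𝔡⁺(y,t) (resp. 𝔡⁻(y,t)) as the supremum of limsup_i d(x_i,y) (resp. infimum of liminf_i d(x_i,y)) over minimizing sequences (x_i) of x ↦ f(x) + d(x,y)^p/(p t^{p−1}). Then for every y with Q_t f(y) > −∞ on (0,t_*(y)) and all 0 < s < t < t_*(y), one has 𝔡⁺(y,s) ≤ 𝔡⁻(y,t); in particular both functions t ↦ 𝔡±(y,t) are non-decreasing. -/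
open Filter

/-- `(X, τ, d)` is a forward extended Polish space. -/
structure IsForwardExtendedPolish (X : Type*) [TopologicalSpace X]
    (d : X → X → ENNReal) : Prop where
  zero_iff : ∀ x y : X, d x y = 0 ↔ x = y
  triangle : ∀ x y z : X, d x z ≤ d x y + d y z
  theta : ∃ Θ : X → ℝ → ℝ, (∀ x r, 0 < r → 1 ≤ Θ x r) ∧
    (∀ x, MonotoneOn (Θ x) (Set.Ioi (0 : ℝ))) ∧
    (∀ x r, 0 < r →
      reversibility d {y | d x y < ENNReal.ofReal r} ≤ ENNReal.ofReal (Θ x r))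
  fwdComplete : ∀ u : ℕ → X,
    (∀ ε : ENNReal, 0 < ε → ∃ N, ∀ i j, N ≤ i → i ≤ j → d (u i) (u j) < ε) →
    ∃ x : X, Tendsto (fun i => d x (u i)) atTop (nhds 0) ∧
      Tendsto (fun i => d (u i) x) atTop (nhds 0)
  polish : PolishSpace X
  backward_tendsto : ∀ (u : ℕ → X) (x : X),
    Tendsto (fun i => d (u i) x) atTop (nhds 0) → Tendsto u atTop (nhds x)
  lsc : LowerSemicontinuous fun p : X × X => d p.1 p.2

/-- The Hopf–Lax integrand `Φ(t,x,y) = f(x) + d(x,y)^p/(p t^{p−1})`. -/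
noncomputable def hlCost {X : Type*} (d : X → X → ENNReal) (p : ℝ) (f : X → EReal)
    (t : ℝ) (x y : X) : EReal :=
  f x + ((d x y ^ p / ENNReal.ofReal (p * t ^ (p - 1)) : ENNReal) : EReal)

/-- The Hopf–Lax semigroup `Q_t f(y) = inf_x Φ(t,x,y)`. -/
noncomputable def hlQ {X : Type*} (d : X → X → ENNReal) (p : ℝ) (f : X → EReal)
    (t : ℝ) (y : X) : EReal :=
  ⨅ x : X, hlCost d p f t x y

/-- `𝔡⁺(y,t)`: the supremum of `limsup_i d(x_i,y)` over minimizing sequences `(x_i)` of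
`x ↦ Φ(t,x,y)`. -/
noncomputable def hlDPlus {X : Type*} (d : X → X → ENNReal) (p : ℝ) (f : X → EReal)
    (y : X) (t : ℝ) : ENNReal :=
  ⨆ u : {u : ℕ → X //
      Tendsto (fun i => hlCost d p f t (u i) y) atTop (nhds (hlQ d p f t y))},
    Filter.limsup (fun i => d (u.1 i) y) atTop

/-- `𝔡⁻(y,t)`: the infimum of `liminf_i d(x_i,y)` over minimizing sequences `(x_i)` of
`x ↦ Φ(t,x,y)`. -/
noncomputable def hlDMinus {X : Type*} (d : X → X → ENNReal) (p : ℝ) (f : X → EReal)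
    (y : X) (t : ℝ) : ENNReal :=
  ⨅ u : {u : ℕ → X //
      Tendsto (fun i => hlCost d p f t (u i) y) atTop (nhds (hlQ d p f t y))},
    Filter.liminf (fun i => d (u.1 i) y) atTop

/-!
For `s < t` put `κ = 1/(p s^{p-1}) - 1/(p t^{p-1}) > 0`, so that `Φ(s,x,y) - Φ(t,x,y) = κ d(x,y)^p`.
Adding `Q_t f(y) ≤ Φ(t,x,y)` and `Q_s f(y) ≤ Φ(s,x',y)` gives
`κ d(x,y)^p ≤ κ d(x',y)^p + (Φ(s,x,y) - Q_s f(y)) + (Φ(t,x',y) - Q_t f(y))`.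
Along an `s`-minimizing sequence `(x_i)` and a `t`-minimizing sequence `(x'_j)` both excesses
tend to `0`, whence `limsup_i d(x_i,y) ≤ liminf_j d(x'_j,y)`, i.e. `𝔡⁺(y,s) ≤ 𝔡⁻(y,t)`.
Monotonicity of `𝔡±` follows because minimizing sequences exist, so `𝔡⁻ ≤ 𝔡⁺` at every time.
-/

open Topology
open scoped ENNReal

theorem ENNReal.limsup_le_liminf_of_le_add {ι κ : Type*} {l : Filter ι} {l' : Filter κ}
    [l'.NeBot] {α δ : ι → ℝ≥0∞} {β η : κ → ℝ≥0∞} (hδ : Tendsto δ l (𝓝 0))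
    (hη : Tendsto η l' (𝓝 0)) (h : ∀ᶠ i in l, ∀ᶠ j in l', α i ≤ β j + η j + δ i) :
    limsup α l ≤ liminf β l' := by
  have hα : ∀ᶠ i in l, α i ≤ liminf β l' + δ i := by
    filter_upwards [h] with i hi
    calc α i ≤ liminf (fun j => β j + η j + δ i) l' := le_liminf_of_le (by isBoundedDefault) hi
      _ = liminf β l' + δ i := by
        rw [liminf_add_const _ _ _ (by isBoundedDefault) (by isBoundedDefault)]
        exact congrArg (· + δ i) (ENNReal.liminf_add_of_right_tendsto_zero hη β)
  calc limsup α l ≤ limsup (fun i => liminf β l' + δ i) l := limsup_le_limsup hα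
    _ ≤ liminf β l' := by
      rw [← Pi.add_def, ENNReal.limsup_add_of_right_tendsto_zero hδ]
      exact limsup_le_of_le (by isBoundedDefault) (.of_forall fun _ => le_rfl)

theorem ENNReal.limsup_le_liminf_of_rpow {ι : Type*} {l : Filter ι} {a b : ι → ℝ≥0∞} {p : ℝ}
    (hp : 0 < p) (h : limsup (fun i => a i ^ p) l ≤ liminf (fun i => b i ^ p) l) :
    limsup a l ≤ liminf b l := by
  rwa [← (ENNReal.orderIsoRpow p hp).le_iff_le, OrderIso.limsup_apply, OrderIso.liminf_apply]

theorem ENNReal.rpow_eq_ofReal_toReal_rpow {x : ℝ≥0∞} {p : ℝ} (hx : x ≠ ⊤) (hp : 0 ≤ p) :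
    x ^ p = ENNReal.ofReal (x.toReal ^ p) := by
  rw [← ENNReal.ofReal_rpow_of_nonneg ENNReal.toReal_nonneg hp, ENNReal.ofReal_toReal hx]

theorem exists_seq_tendsto_iInf {α X : Type*} [CompleteLinearOrder α] [TopologicalSpace α]
    [OrderTopology α] [FirstCountableTopology α] [Nonempty X] (g : X → α) :
    ∃ u : ℕ → X, Tendsto (g ∘ u) atTop (𝓝 (⨅ x, g x)) := by
  obtain ⟨w, -, hw, hmem⟩ :=
    exists_seq_tendsto_sInf (Set.range_nonempty g) (OrderBot.bddBelow (Set.range g))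
  choose u hu using hmem
  exact ⟨u, by simpa [Function.comp_def, hu, sInf_range] using hw⟩

noncomputable def hlCostReal {X : Type*} (d : X → X → ℝ≥0∞) (p : ℝ) (f : X → EReal)
    (t : ℝ) (x y : X) : ℝ :=
  (f x).toReal + (d x y).toReal ^ p / (p * t ^ (p - 1))

noncomputable def hlExcess {X : Type*} (d : X → X → ℝ≥0∞) (p : ℝ) (f : X → EReal)
    (t : ℝ) (x y : X) : ℝ :=
  hlCostReal d p f t x y - (hlQ d p f t y).toReal

section HopfLax

variable {X : Type*} {d : X → X → ℝ≥0∞} {p s t : ℝ} {f : X → EReal} {x x' y : X}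

theorem hlQ_le_hlCost : hlQ d p f t y ≤ hlCost d p f t x y :=
  iInf_le _ x

theorem hlQ_antitoneOn (hp : 1 ≤ p) : AntitoneOn (fun t => hlQ d p f t y) (Set.Ioi 0) := by
  intro s (hs : 0 < s) t _ hst
  refine iInf_mono fun x => add_le_add le_rfl (EReal.coe_ennreal_le_coe_ennreal_iff.mpr ?_)
  refine ENNReal.div_le_div_left (ENNReal.ofReal_le_ofReal ?_) _
  gcongr

theorem dist_rpow_div_ne_top (hp : 0 < p) (ht : 0 < t) (hd : d x y ≠ ⊤) :
    d x y ^ p / ENNReal.ofReal (p * t ^ (p - 1)) ≠ ⊤ :=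
  ENNReal.div_ne_top (ENNReal.rpow_ne_top_of_nonneg hp.le hd)
    (ENNReal.ofReal_pos.mpr (mul_pos hp (Real.rpow_pos_of_pos ht _))).ne'

theorem hlCost_ne_top (hp : 0 < p) (ht : 0 < t) (hf : f x ≠ ⊤) (hd : d x y ≠ ⊤) :
    hlCost d p f t x y ≠ ⊤ :=
  (EReal.add_lt_top hf (EReal.coe_ennreal_eq_top_iff.not.mpr (dist_rpow_div_ne_top hp ht hd))).ne

theorem ne_top_of_hlCost_ne_top (hp : 0 < p) (hfb : f x ≠ ⊥) (h : hlCost d p f t x y ≠ ⊤) :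
    f x ≠ ⊤ ∧ d x y ≠ ⊤ := by
  refine ⟨fun hft => h ?_, fun hd => h ?_⟩
  · rw [hlCost, hft, EReal.top_add_of_ne_bot (EReal.coe_ennreal_ne_bot _)]
  · rw [hlCost, hd, ENNReal.top_rpow_of_pos hp, ENNReal.top_div_of_ne_top ENNReal.ofReal_ne_top,
      EReal.coe_ennreal_top, EReal.add_top_of_ne_bot hfb]

theorem hlCost_eq_coe_hlCostReal (hp : 0 < p) (ht : 0 < t) (hfb : f x ≠ ⊥) (hft : f x ≠ ⊤)
    (hd : d x y ≠ ⊤) : hlCost d p f t x y = hlCostReal d p f t x y := by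
  rw [hlCost, hlCostReal, ← EReal.coe_toReal hft hfb,
    ← EReal.coe_ennreal_toReal (dist_rpow_div_ne_top hp ht hd), ENNReal.toReal_div,
    ENNReal.toReal_rpow, ENNReal.toReal_ofReal (mul_pos hp (Real.rpow_pos_of_pos ht _)).le,
    EReal.coe_add, EReal.toReal_coe]

theorem hlExcess_nonneg (hp : 0 < p) (ht : 0 < t) (hQ : hlQ d p f t y ≠ ⊥)
    (hfb : f x ≠ ⊥) (hft : f x ≠ ⊤) (hd : d x y ≠ ⊤) : 0 ≤ hlExcess d p f t x y := by
  have h := (hlQ_le_hlCost (x := x)).trans_eq (hlCost_eq_coe_hlCostReal hp ht hfb hft hd)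
  simpa [hlExcess] using EReal.toReal_le_toReal h hQ (EReal.coe_ne_top _)

theorem hlCostReal_sub_hlCostReal (d : X → X → ℝ≥0∞) (p : ℝ) (f : X → EReal) (s t : ℝ)
    (x y : X) : hlCostReal d p f s x y - hlCostReal d p f t x y =
      (d x y).toReal ^ p * (1 / (p * s ^ (p - 1)) - 1 / (p * t ^ (p - 1))) := by
  unfold hlCostReal
  ring

theorem toReal_rpow_mul_le_add_hlExcess (hp : 0 < p) (hs : 0 < s) (ht : 0 < t)
    (hQs : hlQ d p f s y ≠ ⊥) (hQt : hlQ d p f t y ≠ ⊥)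
    (hx : f x ≠ ⊥ ∧ f x ≠ ⊤ ∧ d x y ≠ ⊤) (hx' : f x' ≠ ⊥ ∧ f x' ≠ ⊤ ∧ d x' y ≠ ⊤) :
    (d x y).toReal ^ p * (1 / (p * s ^ (p - 1)) - 1 / (p * t ^ (p - 1))) ≤
      (d x' y).toReal ^ p * (1 / (p * s ^ (p - 1)) - 1 / (p * t ^ (p - 1))) +
        hlExcess d p f t x' y + hlExcess d p f s x y := by
  have hx_t := hlExcess_nonneg hp ht hQt hx.1 hx.2.1 hx.2.2
  have hx'_s := hlExcess_nonneg hp hs hQs hx'.1 hx'.2.1 hx'.2.2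
  have := hlCostReal_sub_hlCostReal d p f s t x y
  have := hlCostReal_sub_hlCostReal d p f s t x' y
  unfold hlExcess at *
  linarith

theorem eventually_ne_top_of_tendsto_hlQ {u : ℕ → X} (hp : 0 < p) (hf : ∀ x, f x ≠ ⊥)
    (hQt : hlQ d p f t y ≠ ⊤)
    (hu : Tendsto (fun i => hlCost d p f t (u i) y) atTop (𝓝 (hlQ d p f t y))) :
    ∀ᶠ i in atTop, f (u i) ≠ ⊥ ∧ f (u i) ≠ ⊤ ∧ d (u i) y ≠ ⊤ := by
  filter_upwards [hu.eventually_lt_const (lt_top_iff_ne_top.mpr hQt)] with i hi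
  exact ⟨hf _, ne_top_of_hlCost_ne_top hp (hf _) hi.ne⟩

theorem tendsto_hlExcess_of_tendsto_hlQ {u : ℕ → X} (hp : 0 < p) (ht : 0 < t)
    (hf : ∀ x, f x ≠ ⊥) (hQb : hlQ d p f t y ≠ ⊥) (hQt : hlQ d p f t y ≠ ⊤)
    (hu : Tendsto (fun i => hlCost d p f t (u i) y) atTop (𝓝 (hlQ d p f t y))) :
    Tendsto (fun i => hlExcess d p f t (u i) y) atTop (𝓝 0) := by
  rw [← sub_self (hlQ d p f t y).toReal]
  refine (((EReal.tendsto_toReal hQt hQb).comp hu).congr' ?_).sub_const _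
  filter_upwards [eventually_ne_top_of_tendsto_hlQ hp hf hQt hu] with i hi
  simp [hlCost_eq_coe_hlCostReal hp ht hi.1 hi.2.1 hi.2.2]

theorem limsup_dist_le_liminf_dist {u v : ℕ → X} (hp : 1 < p) (hs : 0 < s) (hst : s < t)
    (hf : ∀ x, f x ≠ ⊥) (hQsb : hlQ d p f s y ≠ ⊥) (hQst : hlQ d p f s y ≠ ⊤)
    (hQtb : hlQ d p f t y ≠ ⊥) (hQtt : hlQ d p f t y ≠ ⊤)
    (hu : Tendsto (fun i => hlCost d p f s (u i) y) atTop (𝓝 (hlQ d p f s y)))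
    (hv : Tendsto (fun j => hlCost d p f t (v j) y) atTop (𝓝 (hlQ d p f t y))) :
    limsup (fun i => d (u i) y) atTop ≤ liminf (fun j => d (v j) y) atTop := by
  have hp0 : 0 < p := by linarith
  have ht : 0 < t := hs.trans hst
  set κ := 1 / (p * s ^ (p - 1)) - 1 / (p * t ^ (p - 1))
  have hκ : 0 < κ := sub_pos.mpr <| one_div_lt_one_div_of_lt
    (mul_pos hp0 (Real.rpow_pos_of_pos hs _))
    (mul_lt_mul_of_pos_left (Real.rpow_lt_rpow hs.le hst (by linarith)) hp0)
  refine ENNReal.limsup_le_liminf_of_rpow hp0 <| ENNReal.limsup_le_liminf_of_le_add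
    (δ := fun i => .ofReal (hlExcess d p f s (u i) y / κ))
    (η := fun j => .ofReal (hlExcess d p f t (v j) y / κ)) ?_ ?_ ?_
  · simpa using ENNReal.tendsto_ofReal
      ((tendsto_hlExcess_of_tendsto_hlQ hp0 hs hf hQsb hQst hu).div_const κ)
  · simpa using ENNReal.tendsto_ofReal
      ((tendsto_hlExcess_of_tendsto_hlQ hp0 ht hf hQtb hQtt hv).div_const κ)
  filter_upwards [eventually_ne_top_of_tendsto_hlQ hp0 hf hQst hu] with i hi
  filter_upwards [eventually_ne_top_of_tendsto_hlQ hp0 hf hQtt hv] with j hj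
  have key := toReal_rpow_mul_le_add_hlExcess hp0 hs ht hQsb hQtb hi hj
  rw [ENNReal.rpow_eq_ofReal_toReal_rpow hi.2.2 hp0.le,
    ENNReal.rpow_eq_ofReal_toReal_rpow hj.2.2 hp0.le]
  refine (ENNReal.ofReal_le_ofReal ?_).trans
    (ENNReal.ofReal_add_le.trans (add_le_add ENNReal.ofReal_add_le le_rfl))
  refine le_of_mul_le_mul_right ?_ hκ
  rwa [add_mul, add_mul, div_mul_cancel₀ _ hκ.ne', div_mul_cancel₀ _ hκ.ne']

theorem hlDPlus_le_hlDMinus (hp : 1 < p) (hs : 0 < s) (hst : s < t) (hf : ∀ x, f x ≠ ⊥)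
    (hQsb : hlQ d p f s y ≠ ⊥) (hQst : hlQ d p f s y ≠ ⊤)
    (hQtb : hlQ d p f t y ≠ ⊥) (hQtt : hlQ d p f t y ≠ ⊤) :
    hlDPlus d p f y s ≤ hlDMinus d p f y t :=
  iSup_le fun u => le_iInf fun v =>
    limsup_dist_le_liminf_dist hp hs hst hf hQsb hQst hQtb hQtt u.2 v.2

theorem hlDMinus_le_hlDPlus [Nonempty X] : hlDMinus d p f y t ≤ hlDPlus d p f y t := by
  obtain ⟨u, hu⟩ := exists_seq_tendsto_iInf (hlCost d p f t · y)
  exact iInf_le_of_le ⟨u, hu⟩ (le_trans liminf_le_limsup (le_iSup_of_le ⟨u, hu⟩ le_rfl))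

end HopfLax

-- `t < t_*(y)` is encoded as `∃ T > t, Q_T f(y) ≠ ⊥`.
theorem stmt_16_general {X : Type*} (d : X → X → ENNReal)
    (p : ℝ) (hp : 1 < p)
    (f : X → EReal) (hfbot : ∀ x, f x ≠ ⊥)
    (y : X) (hyD : ∃ x, f x ≠ ⊤ ∧ d x y ≠ ⊤) :
    (∀ s t : ℝ, 0 < s → s < t → (∃ T : ℝ, t < T ∧ hlQ d p f T y ≠ ⊥) →
      hlDPlus d p f y s ≤ hlDMinus d p f y t) ∧
    (∀ s t : ℝ, 0 < s → s ≤ t → (∃ T : ℝ, t < T ∧ hlQ d p f T y ≠ ⊥) →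
      hlDPlus d p f y s ≤ hlDPlus d p f y t ∧
      hlDMinus d p f y s ≤ hlDMinus d p f y t) := by
  obtain ⟨x₀, hfx₀, hdx₀⟩ := hyD
  have : Nonempty X := ⟨x₀⟩
  have hQ_ne_top (t : ℝ) (ht : 0 < t) : hlQ d p f t y ≠ ⊤ :=
    ne_top_of_le_ne_top (hlCost_ne_top (by linarith) ht hfx₀ hdx₀) hlQ_le_hlCost
  have hQ_ne_bot (r t : ℝ) (hr : 0 < r) (hrt : r ≤ t) :
      (∃ T : ℝ, t < T ∧ hlQ d p f T y ≠ ⊥) → hlQ d p f r y ≠ ⊥ := fun ⟨T, hT, hQT⟩ =>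
    ne_bot_of_le_ne_bot hQT <| hlQ_antitoneOn hp.le hr (hr.trans_le (hrt.trans hT.le))
      (hrt.trans hT.le)
  have hcross (s t : ℝ) (hs : 0 < s) (hst : s < t) (hT : ∃ T : ℝ, t < T ∧ hlQ d p f T y ≠ ⊥) :
      hlDPlus d p f y s ≤ hlDMinus d p f y t :=
    hlDPlus_le_hlDMinus hp hs hst hfbot (hQ_ne_bot s t hs hst.le hT) (hQ_ne_top s hs)
      (hQ_ne_bot t t (hs.trans hst) le_rfl hT) (hQ_ne_top t (hs.trans hst))
  refine ⟨hcross, fun s t hs hst hT => ?_⟩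
  rcases hst.eq_or_lt with rfl | hst
  · exact ⟨le_rfl, le_rfl⟩
  · exact ⟨(hcross s t hs hst hT).trans hlDMinus_le_hlDPlus,
      hlDMinus_le_hlDPlus.trans (hcross s t hs hst hT)⟩

/-- monotonicity of the minimizing distances for the Hopf–Lax semigroup:
for `y` with `Q_t f(y) > −∞` on `(0, t_*(y))` and all `0 < s < t < t_*(y)` one has
`𝔡⁺(y,s) ≤ 𝔡⁻(y,t)`; in particular both `t ↦ 𝔡±(y,t)` are non-decreasing.
(Here `t < t_*(y)` is expressed as `∃ T > t, Q_T f(y) ≠ −∞`.) -/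
theorem stmt_16 {X : Type*} [TopologicalSpace X] (d : X → X → ENNReal)
    (hX : IsForwardExtendedPolish X d) (p : ℝ) (hp : 1 < p)
    (f : X → EReal) (hfbot : ∀ x, f x ≠ ⊥) (hfprop : ∃ x, f x ≠ ⊤)
    (y : X) (hyD : ∃ x, f x ≠ ⊤ ∧ d x y ≠ ⊤) :
    (∀ s t : ℝ, 0 < s → s < t → (∃ T : ℝ, t < T ∧ hlQ d p f T y ≠ ⊥) →
      hlDPlus d p f y s ≤ hlDMinus d p f y t) ∧
    (∀ s t : ℝ, 0 < s → s ≤ t → (∃ T : ℝ, t < T ∧ hlQ d p f T y ≠ ⊥) →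
      hlDPlus d p f y s ≤ hlDPlus d p f y t ∧
      hlDMinus d p f y s ≤ hlDMinus d p f y t) :=
  stmt_16_general d p hp f hfbot y hyD
end

section
/- (Time derivative of the Hopf–Lax semigroup in the asymmetric setting.) With Q_t f(y) = inf_x [f(x) + d(x,y)^p/(p t^{p−1})] and 𝔡±(y,t) defined via minimizing sequences, for every y ∈ 𝒟(f) the map t ↦ Q_t f(y) is locally Lipschitz on (0, t_*(y)) and its one-sided derivatives satisfy d/dt⁻ [Q_t f(y)] = −(1/q)·𝔡⁻(y,t)^p / t^p and d/dt⁺ [Q_t f(y)] = −(1/q)·𝔡⁺(y,t)^p / t^p, where 1/p + 1/q = 1. In particular t ↦ Q_t f(y) is differentiable at t iff 𝔡⁻(y,t) = 𝔡⁺(y,t). -/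
open Filter

open Set Topology

/-
For `x` with `f x < ⊤` and `d x y < ⊤` the Hopf–Lax cost is affine in `c = 1/(p t^(p-1))`,
with intercept `f x` and slope `d(x,y)^p`, and the other points cost `⊤`. So `Q_t f(y)` is
`g(c(t))` for the lower envelope `g` of a family of affine functions, which is concave, hence
locally Lipschitz, where it is finite. Danskin's argument computes the one-sided derivatives of
such an envelope: the line of a near-minimizer at `c` bounds `g` at nearby points, and
near-minimizers at points `c' → c` are still near-minimizing at `c`, because their slopes stay
bounded. So the left and right derivatives at `c` are the limsup and the liminf of the slopes
along the filter of minimizing indices. That filter is countably generated, so suprema and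
infima over minimizing sequences are limsups and liminfs along it, which identifies them with
`𝔡⁺(y,t)^p` and `𝔡⁻(y,t)^p`. Finally `c` decreases, with `c'(t) = -(1/q) t^(-p)`, so the
chain rule swaps the two sides.
-/

section AffineInf

variable {ι : Type*} (a b : ι → ℝ)

noncomputable def affineInf (c : ℝ) : ℝ := ⨅ i, (a i + b i * c)

/-- A sequence of indices is minimizing at `c` iff it tends to this filter. -/
noncomputable def affineMinFilter (c : ℝ) : Filter ι :=
  comap (fun i => a i + b i * c) (𝓝 (affineInf a b c))

variable {a b} {c c' : ℝ}

lemma affineInf_le (hc : BddBelow (range fun i => a i + b i * c)) (i : ι) :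
    affineInf a b c ≤ a i + b i * c :=
  ciInf_le hc i

lemma exists_lt_affineInf_add [Nonempty ι] {η : ℝ} (hη : 0 < η) :
    ∃ i, a i + b i * c < affineInf a b c + η :=
  exists_lt_of_ciInf_lt (lt_add_of_pos_right _ hη)

lemma affineInf_lt_of_lt_affineInf_add (hc' : BddBelow (range fun i => a i + b i * c'))
    {i : ι} {η : ℝ} (hi : a i + b i * c < affineInf a b c + η) :
    affineInf a b c' < affineInf a b c + η + b i * (c' - c) := by
  linarith [affineInf_le hc' i]

lemma bddBelow_affine_of_le (hb : 0 ≤ b) {c₀ : ℝ}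
    (hc₀ : BddBelow (range fun i => a i + b i * c₀)) (h : c₀ ≤ c) :
    BddBelow (range fun i => a i + b i * c) := by
  obtain ⟨m, hm⟩ := hc₀
  refine ⟨m, forall_mem_range.2 fun i => (hm ⟨i, rfl⟩).trans ?_⟩
  dsimp only
  nlinarith [mul_le_mul_of_nonneg_left h (hb i)]

lemma concaveOn_affineInf [Nonempty ι] {s : Set ℝ} (hs : Convex ℝ s)
    (hbdd : ∀ c ∈ s, BddBelow (range fun i => a i + b i * c)) :
    ConcaveOn ℝ s (affineInf a b) := by
  refine ⟨hs, fun x hx z hz θ₁ θ₂ hθ₁ hθ₂ hθ => le_ciInf fun i => ?_⟩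
  have hx' := mul_le_mul_of_nonneg_left (affineInf_le (hbdd x hx) i) hθ₁
  have hz' := mul_le_mul_of_nonneg_left (affineInf_le (hbdd z hz) i) hθ₂
  simp only [smul_eq_mul]
  linear_combination hx' + hz' + a i * hθ

lemma hasBasis_affineMinFilter (hc : BddBelow (range fun i => a i + b i * c)) :
    (affineMinFilter a b c).HasBasis (fun η : ℝ => 0 < η)
      (fun η => {i | a i + b i * c < affineInf a b c + η}) := by
  refine (Metric.nhds_basis_ball.comap _).congr (fun _ => Iff.rfl) fun η _ => ?_
  ext i
  have := affineInf_le hc i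
  simp only [mem_preimage, Metric.mem_ball, Real.dist_eq, abs_lt, mem_ofPred_eq]
  exact ⟨fun h => by linarith [h.2], fun h => ⟨by linarith, by linarith⟩⟩

lemma affineMinFilter_neBot [Nonempty ι] (hc : BddBelow (range fun i => a i + b i * c)) :
    (affineMinFilter a b c).NeBot :=
  (hasBasis_affineMinFilter hc).neBot_iff.2 fun hη => exists_lt_affineInf_add hη

lemma isBoundedUnder_le_affineMinFilter
    (hbdd : ∀ᶠ c' in 𝓝 c, BddBelow (range fun i => a i + b i * c')) :
    IsBoundedUnder (· ≤ ·) (affineMinFilter a b c) b := by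
  obtain ⟨c₀, hc₀c, hc₀⟩ := hbdd.exists_lt
  refine ⟨(affineInf a b c + 1 - affineInf a b c₀) / (c - c₀), eventually_map.2 <|
    (hasBasis_affineMinFilter hbdd.self_of_nhds).eventually_iff.2
      ⟨1, one_pos, fun i hi => ?_⟩⟩
  have := affineInf_lt_of_lt_affineInf_add hc₀ hi
  show b i ≤ _
  rw [le_div_iff₀ (sub_pos.2 hc₀c)]
  linarith

lemma isBoundedUnder_ge_affineMinFilter
    (hbdd : ∀ᶠ c' in 𝓝 c, BddBelow (range fun i => a i + b i * c')) :
    IsBoundedUnder (· ≥ ·) (affineMinFilter a b c) b := by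
  obtain ⟨c₁, hcc₁, hc₁⟩ := hbdd.exists_gt
  refine ⟨(affineInf a b c₁ - affineInf a b c - 1) / (c₁ - c), eventually_map.2 <|
    (hasBasis_affineMinFilter hbdd.self_of_nhds).eventually_iff.2
      ⟨1, one_pos, fun i hi => ?_⟩⟩
  have := affineInf_lt_of_lt_affineInf_add hc₁ hi
  show _ ≤ b i
  rw [div_le_iff₀ (sub_pos.2 hcc₁)]
  linarith

lemma continuousAt_affineInf [Nonempty ι]
    (hbdd : ∀ᶠ c' in 𝓝 c, BddBelow (range fun i => a i + b i * c')) :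
    ContinuousAt (affineInf a b) c := by
  obtain ⟨l, u, hc, hsub⟩ := mem_nhds_iff_exists_Ioo_subset.1 hbdd
  exact ((concaveOn_affineInf (convex_Ioo l u) fun _ h => hsub h).continuousOn
    isOpen_Ioo).continuousAt (Ioo_mem_nhds hc.1 hc.2)

lemma exists_forall_lt_affineInf_add_of_nhdsLT [Nonempty ι]
    (hbdd : ∀ᶠ c' in 𝓝 c, BddBelow (range fun i => a i + b i * c')) {η : ℝ}
    (hη : 0 < η) :
    ∃ δ > 0, ∀ᶠ c' in 𝓝[<] c, ∀ i, a i + b i * c' < affineInf a b c' + δ →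
      a i + b i * c < affineInf a b c + η := by
  obtain ⟨c₀, hc₀c, hc₀⟩ := hbdd.exists_lt
  have hg := continuousAt_affineInf hbdd
  set B := (affineInf a b c + 1 - affineInf a b c₀) / (c - c₀) + 1
  have hratio :
      ∀ᶠ c' in 𝓝 c, (affineInf a b c' + 1 - affineInf a b c₀) / (c' - c₀) < B :=
    ContinuousAt.eventually_lt (((hg.add_const 1).sub_const _).div
      (continuousAt_id.sub_const _) (sub_pos.2 hc₀c).ne') continuousAt_const (lt_add_one _)
  have hclose : ∀ᶠ c' in 𝓝 c, affineInf a b c' + B * (c - c') < affineInf a b c + η / 2 :=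
    ContinuousAt.eventually_lt (hg.add (continuousAt_const.mul
      (continuousAt_const.sub continuousAt_id))) continuousAt_const (by simp [hη])
  refine ⟨min 1 (η / 2), by positivity, ?_⟩
  filter_upwards [nhdsWithin_le_nhds (hratio.and (hclose.and (Ioi_mem_nhds hc₀c))),
    self_mem_nhdsWithin] with c' ⟨hr, hcl, hc₀c'⟩ hc'c i hi
  have hbi : b i < B := by
    have := affineInf_lt_of_lt_affineInf_add hc₀ hi
    have : b i < (affineInf a b c' + 1 - affineInf a b c₀) / (c' - c₀) := by
      rw [lt_div_iff₀ (sub_pos.2 hc₀c')]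
      linarith [min_le_left 1 (η / 2)]
    linarith
  have := mul_lt_mul_of_pos_right hbi (sub_pos.2 (show c' < c from hc'c))
  linarith [min_le_right 1 (η / 2)]

theorem hasDerivWithinAt_affineInf_Iio [Nonempty ι]
    (hbdd : ∀ᶠ c' in 𝓝 c, BddBelow (range fun i => a i + b i * c')) :
    HasDerivWithinAt (affineInf a b) (limsup b (affineMinFilter a b c)) (Iio c) c := by
  have hc := hbdd.self_of_nhds
  have := affineMinFilter_neBot hc
  have hleft : ∀ᶠ c' in 𝓝[<] c, BddBelow (range fun i => a i + b i * c') ∧ 0 < c - c' :=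
    (hbdd.filter_mono nhdsWithin_le_nhds).and
      (eventually_nhdsWithin_of_forall fun _ h => sub_pos.2 h)
  rw [hasDerivWithinAt_iff_tendsto_slope' self_notMem_Iio, tendsto_order]
  refine ⟨fun β hβ => ?_, fun β hβ => ?_⟩
  · obtain ⟨β', hββ', hβ'⟩ := exists_between hβ
    have hfreq := frequently_lt_of_lt_limsup
      (isBoundedUnder_ge_affineMinFilter hbdd).isCoboundedUnder_le hβ'
    filter_upwards [hleft] with c' ⟨hc', hpos⟩
    obtain ⟨i, hbi, hi⟩ := (hfreq.and_eventually ((hasBasis_affineMinFilter hc).mem_of_mem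
      (mul_pos (sub_pos.2 hββ') hpos))).exists
    have := affineInf_lt_of_lt_affineInf_add hc' hi
    have := mul_lt_mul_of_pos_right hbi hpos
    rw [slope_def_field, lt_div_iff_of_neg (by linarith)]
    linarith
  · obtain ⟨β', hβ', hβ'β⟩ := exists_between hβ
    obtain ⟨η, hη, hgood⟩ := (hasBasis_affineMinFilter hc).eventually_iff.1
      (eventually_lt_of_limsup_lt hβ' (isBoundedUnder_le_affineMinFilter hbdd))
    obtain ⟨δ, hδ, htransfer⟩ := exists_forall_lt_affineInf_add_of_nhdsLT hbdd hη
    have hsmall : ∀ᶠ c' in 𝓝[<] c, (β - β') * (c - c') < δ :=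
      nhdsWithin_le_nhds (ContinuousAt.eventually_lt (by fun_prop) continuousAt_const
        (by simp [hδ]))
    filter_upwards [hleft, htransfer, hsmall] with c' ⟨hc', hpos⟩ htr hsm
    obtain ⟨i, hi⟩ :=
      exists_lt_affineInf_add (a := a) (b := b) (c := c') (mul_pos (sub_pos.2 hβ'β) hpos)
    have hbi : b i < β' := hgood (htr i (hi.trans (by linarith)))
    have := affineInf_lt_of_lt_affineInf_add hc hi
    have := mul_lt_mul_of_pos_right hbi hpos
    rw [slope_def_field, div_lt_iff_of_neg (by linarith)]
    linarith

theorem hasDerivWithinAt_affineInf_Ioi [Nonempty ι]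
    (hbdd : ∀ᶠ c' in 𝓝 c, BddBelow (range fun i => a i + b i * c')) :
    HasDerivWithinAt (affineInf a b) (liminf b (affineMinFilter a b c)) (Ioi c) c := by
  have := affineMinFilter_neBot hbdd.self_of_nhds
  have hreflect : affineInf a (-b) ∘ Neg.neg = affineInf a b := by
    funext c'
    simp [affineInf]
  have hfilter : affineMinFilter a (-b) (-c) = affineMinFilter a b c := by
    simp [affineMinFilter, affineInf]
  have hbdd' : ∀ᶠ c' in 𝓝 (-c), BddBelow (range fun i => a i + (-b) i * c') := by
    have hneg : Tendsto Neg.neg (𝓝 (-c)) (𝓝 c) := by simpa using tendsto_neg (-c)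
    simpa using hneg.eventually hbdd
  -- `c ↦ -c` turns the slopes `b` into `-b` and right derivatives into left ones
  have h := (hasDerivWithinAt_affineInf_Iio hbdd').comp c (hasDerivAt_neg c).hasDerivWithinAt
    (fun _ hx => neg_lt_neg (mem_Ioi.1 hx))
  rw [hreflect, hfilter] at h
  have := Antitone.map_liminf_of_continuousAt (F := affineMinFilter a b c) (f := Neg.neg)
    (fun _ _ h => neg_le_neg h) b continuous_neg.continuousAt
    (isBoundedUnder_le_affineMinFilter hbdd).isCoboundedUnder_ge
    (isBoundedUnder_ge_affineMinFilter hbdd)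
  rwa [show (-b) = Neg.neg ∘ b from rfl, ← this, neg_mul_neg, mul_one] at h

end AffineInf

section MinimizingSequences

variable {α β γ : Type*} [CompleteLinearOrder γ] [DenselyOrdered γ]
  (F : α → β) (l : Filter β) [l.IsCountablyGenerated] (h : α → γ)

lemma iSup_limsup_seq_eq_limsup_comap :
    ⨆ u : {u : ℕ → α // Tendsto (fun i => F (u i)) atTop l},
      limsup (fun i => h (u.1 i)) atTop = limsup h (comap F l) := by
  refine le_antisymm (iSup_le fun u => ?_) (le_of_forall_lt_imp_le_of_dense fun r hr => ?_)
  · exact (limsup_comp h u.1 atTop).trans_le (limsup_le_limsup_of_le (tendsto_comap_iff.2 u.2))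
  · obtain ⟨v, hv, hvr⟩ := exists_seq_forall_of_frequently (frequently_lt_of_lt_limsup
      (by isBoundedDefault) hr)
    exact le_iSup_of_le ⟨v, tendsto_comap_iff.1 hv⟩
      (le_limsup_of_frequently_le (Frequently.of_forall fun n => (hvr n).le))

lemma iInf_liminf_seq_eq_liminf_comap :
    ⨅ u : {u : ℕ → α // Tendsto (fun i => F (u i)) atTop l},
      liminf (fun i => h (u.1 i)) atTop = liminf h (comap F l) := by
  refine le_antisymm (le_of_forall_gt_imp_ge_of_dense fun r hr => ?_) (le_iInf fun u => ?_)
  · obtain ⟨v, hv, hvr⟩ := exists_seq_forall_of_frequently (frequently_lt_of_liminf_lt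
      (by isBoundedDefault) hr)
    exact iInf_le_of_le ⟨v, tendsto_comap_iff.1 hv⟩
      (liminf_le_of_frequently_le (Frequently.of_forall fun n => (hvr n).le))
  · exact (liminf_le_liminf_of_le (tendsto_comap_iff.2 u.2)).trans_eq
      (liminf_comp h u.1 atTop).symm

end MinimizingSequences

section RpowLimsup

variable {ι : Type*} {F : Filter ι} [F.NeBot] {h : ι → ENNReal} {p : ℝ} {C : ENNReal}

lemma limsup_rpow_eq (hp : 0 < p) : limsup h F ^ p = limsup (fun i => h i ^ p) F :=
  (ENNReal.monotone_rpow_of_nonneg hp.le).map_limsup_of_continuousAt h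
    ENNReal.continuous_rpow_const.continuousAt

lemma liminf_rpow_eq (hp : 0 < p) : liminf h F ^ p = liminf (fun i => h i ^ p) F :=
  (ENNReal.monotone_rpow_of_nonneg hp.le).map_liminf_of_continuousAt h
    ENNReal.continuous_rpow_const.continuousAt

lemma limsup_ne_top_of_eventually_rpow_le (hp : 0 < p) (hC : C ≠ ⊤)
    (hhC : ∀ᶠ i in F, h i ^ p ≤ C) : limsup h F ≠ ⊤ := by
  intro htop
  have : limsup h F ^ p ≤ C :=
    (limsup_rpow_eq hp).trans_le (limsup_le_of_le (by isBoundedDefault) hhC)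
  rw [htop, ENNReal.top_rpow_of_pos hp] at this
  exact hC (top_le_iff.1 this)

lemma toReal_limsup_rpow (hp : 0 < p) (hC : C ≠ ⊤) (hhC : ∀ᶠ i in F, h i ^ p ≤ C) :
    (limsup h F).toReal ^ p = limsup (fun i => (h i).toReal ^ p) F := by
  simp_rw [ENNReal.toReal_rpow, limsup_rpow_eq hp]
  exact (ENNReal.limsup_toReal_eq hC hhC).symm

lemma toReal_liminf_rpow (hp : 0 < p) (hC : C ≠ ⊤) (hhC : ∀ᶠ i in F, h i ^ p ≤ C) :
    (liminf h F).toReal ^ p = liminf (fun i => (h i).toReal ^ p) F := by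
  simp_rw [ENNReal.toReal_rpow, liminf_rpow_eq hp]
  exact (ENNReal.liminf_toReal_eq hC hhC).symm

end RpowLimsup

lemma exists_hasDerivAt_iff_eq {g : ℝ → ℝ} {t l r : ℝ} (hl : HasDerivWithinAt g l (Iio t) t)
    (hr : HasDerivWithinAt g r (Ioi t) t) : (∃ L, HasDerivAt g L t) ↔ l = r := by
  refine ⟨fun ⟨L, hL⟩ => ?_, fun hlr => ⟨r, ?_⟩⟩
  · rw [← (uniqueDiffWithinAt_Iio t).eq_deriv _ hL.hasDerivWithinAt hl,
      (uniqueDiffWithinAt_Ioi t).eq_deriv _ hL.hasDerivWithinAt hr]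
  · rw [hasDerivAt_iff_tendsto_slope, ← nhdsLT_sup_nhdsGT, tendsto_sup]
    exact ⟨(hasDerivWithinAt_iff_tendsto_slope' self_notMem_Iio).1 (hlr ▸ hl),
      (hasDerivWithinAt_iff_tendsto_slope' self_notMem_Ioi).1 hr⟩

section HopfLaxCoeff

noncomputable def hlCoeff (p t : ℝ) : ℝ := (p * t ^ (p - 1))⁻¹

variable {p : ℝ}

lemma hlCoeff_strictAntiOn (hp : 1 < p) : StrictAntiOn (hlCoeff p) (Ioi 0) := fun s hs t _ hst =>
  inv_strictAnti₀ (mul_pos (by linarith) (Real.rpow_pos_of_pos hs _))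
    (mul_lt_mul_of_pos_left (Real.rpow_lt_rpow (le_of_lt hs) hst (by linarith)) (by linarith))

lemma hasDerivAt_hlCoeff (hp : 0 < p) {t : ℝ} (ht : 0 < t) :
    HasDerivAt (hlCoeff p) (-(1 - 1 / p) / t ^ p) t := by
  have h := ((Real.hasDerivAt_rpow_const (p := p - 1) (Or.inl ht.ne')).const_mul p).inv
    (mul_pos hp (Real.rpow_pos_of_pos ht _)).ne'
  refine h.congr_deriv ?_
  rw [Real.rpow_sub_one ht.ne', Real.rpow_sub_one ht.ne']
  have := Real.rpow_pos_of_pos ht p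
  field_simp

lemma contDiffOn_hlCoeff (hp : 0 < p) {a b : ℝ} (ha : 0 < a) :
    ContDiffOn ℝ 1 (hlCoeff p) (Icc a b) := by
  unfold hlCoeff
  refine (contDiffOn_const.mul fun s hs => ?_).inv fun s hs => ?_
  · exact (Real.contDiffAt_rpow_const_of_ne (ha.trans_le hs.1).ne').contDiffWithinAt
  · exact (mul_pos hp (Real.rpow_pos_of_pos (ha.trans_le hs.1) _)).ne'

end HopfLaxCoeff

section HopfLax

variable {X : Type*} {d : X → X → ENNReal} {p : ℝ} {f : X → EReal} {y : X} {t T : ℝ}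

def hlDomain (d : X → X → ENNReal) (f : X → EReal) (y : X) : Set X :=
  {x | f x ≠ ⊤ ∧ d x y ≠ ⊤}

/-- On `hlDomain d f y` the cost is `hlIntercept x + hlSlope x * hlCoeff p t`; off it, `⊤`. -/
noncomputable def hlIntercept (d : X → X → ENNReal) (f : X → EReal) (y : X) :
    hlDomain d f y → ℝ :=
  fun x => (f x).toReal

noncomputable def hlSlope (d : X → X → ENNReal) (p : ℝ) (f : X → EReal) (y : X) :
    hlDomain d f y → ℝ :=
  fun x => (d x y).toReal ^ p

lemma hlCost_eq_coe (hp : 0 < p) (ht : 0 < t) {x : X} (hx : x ∈ hlDomain d f y)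
    (hfx : f x ≠ ⊥) :
    hlCost d p f t x y = ((f x).toReal + (d x y).toReal ^ p * hlCoeff p t : ℝ) := by
  have hden : 0 < p * t ^ (p - 1) := mul_pos hp (Real.rpow_pos_of_pos ht _)
  rw [hlCost, ← ENNReal.ofReal_toReal hx.2,
    ENNReal.ofReal_rpow_of_nonneg ENNReal.toReal_nonneg hp.le, ← ENNReal.ofReal_div_of_pos hden,
    EReal.coe_ennreal_ofReal,
    max_eq_left (div_nonneg (Real.rpow_nonneg ENNReal.toReal_nonneg _) hden.le),
    ← EReal.coe_toReal hx.1 hfx, ← EReal.coe_add, ENNReal.toReal_ofReal ENNReal.toReal_nonneg,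
    hlCoeff, div_eq_mul_inv, EReal.toReal_coe]

lemma hlCost_eq_top (hp : 0 < p) {x : X} (hx : x ∉ hlDomain d f y)
    (hfx : f x ≠ ⊥) : hlCost d p f t x y = ⊤ := by
  simp only [hlDomain, mem_ofPred_eq, not_and_or, not_not] at hx
  rcases hx with hfx' | hdx
  · rw [hlCost, hfx']
    exact EReal.top_add_of_ne_bot (EReal.coe_ennreal_ne_bot _)
  · rw [hlCost, hdx, ENNReal.top_rpow_of_pos hp, ENNReal.top_div_of_ne_top ENNReal.ofReal_ne_top,
      EReal.coe_ennreal_top, EReal.add_top_of_ne_bot hfx]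

lemma ne_bot_of_hlQ_ne_bot (hQ : hlQ d p f t y ≠ ⊥) (x : X) : f x ≠ ⊥ := fun hfx =>
  hQ (eq_bot_iff.2 ((iInf_le _ x).trans (by rw [hlCost, hfx, EReal.bot_add])))

lemma bddBelow_hlAffine (hp : 0 < p) (hT : 0 < T) (hQT : hlQ d p f T y ≠ ⊥) {c : ℝ}
    (hc : hlCoeff p T ≤ c) :
    BddBelow (range fun x => hlIntercept d f y x + hlSlope d p f y x * c) := by
  refine bddBelow_affine_of_le (fun x => Real.rpow_nonneg ENNReal.toReal_nonneg p)
    ⟨(hlQ d p f T y).toReal, forall_mem_range.2 fun x => ?_⟩ hc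
  have hle : hlQ d p f T y ≤ hlCost d p f T x y := iInf_le _ _
  rw [hlCost_eq_coe hp hT x.2 (ne_bot_of_hlQ_ne_bot hQT x)] at hle
  have := EReal.toReal_le_toReal hle hQT (EReal.coe_ne_top _)
  rwa [EReal.toReal_coe] at this

lemma hlQ_eq_coe_affineInf (hp : 1 < p) (hS : (hlDomain d f y).Nonempty)
    (hQT : hlQ d p f T y ≠ ⊥) (ht : 0 < t) (htT : t ≤ T) :
    hlQ d p f t y =
      (affineInf (hlIntercept d f y) (hlSlope d p f y) (hlCoeff p t) : EReal) := by
  have := hS.to_subtype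
  have hbdd := bddBelow_hlAffine (by linarith) (ht.trans_le htT) hQT
    ((hlCoeff_strictAntiOn hp).antitoneOn ht (ht.trans_le htT) htT)
  rw [affineInf, Monotone.map_ciInf_of_continuousAt continuous_coe_real_ereal.continuousAt
    EReal.coe_strictMono.monotone hbdd]
  refine le_antisymm (le_iInf fun x => (iInf_le _ x.1).trans_eq
    (hlCost_eq_coe (by linarith) ht x.2 (ne_bot_of_hlQ_ne_bot hQT x))) (le_iInf fun x => ?_)
  by_cases hx : x ∈ hlDomain d f y
  · exact (iInf_le _ ⟨x, hx⟩).trans_eq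
      (hlCost_eq_coe (by linarith) ht hx (ne_bot_of_hlQ_ne_bot hQT x)).symm
  · rw [hlCost_eq_top (by linarith) hx (ne_bot_of_hlQ_ne_bot hQT x)]
    exact le_top

lemma comap_hlCost_eq_map_affineMinFilter (hp : 1 < p) (hS : (hlDomain d f y).Nonempty)
    (hQT : hlQ d p f T y ≠ ⊥) (ht : 0 < t) (htT : t ≤ T) :
    comap (fun x => hlCost d p f t x y) (𝓝 (hlQ d p f t y)) =
      map (↑) (affineMinFilter (hlIntercept d f y) (hlSlope d p f y) (hlCoeff p t)) := by
  rw [hlQ_eq_coe_affineInf hp hS hQT ht htT]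
  have hdom : range ((↑) : hlDomain d f y → X) ∈ comap (fun x => hlCost d p f t x y)
      (𝓝 (affineInf (hlIntercept d f y) (hlSlope d p f y) (hlCoeff p t) : EReal)) := by
    rw [Subtype.range_coe]
    refine mem_comap.2 ⟨Iio ⊤, Iio_mem_nhds (EReal.coe_lt_top _), fun x hx => ?_⟩
    by_contra hxS
    rw [mem_preimage, hlCost_eq_top (by linarith) hxS (ne_bot_of_hlQ_ne_bot hQT x)] at hx
    exact lt_irrefl _ (mem_Iio.1 hx)
  have hcost : (fun x => hlCost d p f t x y) ∘ ((↑) : hlDomain d f y → X) =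
      ((↑) : ℝ → EReal) ∘ fun x => hlIntercept d f y x + hlSlope d p f y x * hlCoeff p t :=
    funext fun x => hlCost_eq_coe (by linarith) ht x.2 (ne_bot_of_hlQ_ne_bot hQT x)
  rw [← map_comap_of_mem hdom, comap_comap, hcost, ← comap_comap,
    ← EReal.isEmbedding_coe.isInducing.nhds_eq_comap]
  rfl

lemma hlDPlus_eq_limsup (hp : 1 < p) (hS : (hlDomain d f y).Nonempty)
    (hQT : hlQ d p f T y ≠ ⊥) (ht : 0 < t) (htT : t ≤ T) :
    hlDPlus d p f y t = limsup (fun x : hlDomain d f y => d x y)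
      (affineMinFilter (hlIntercept d f y) (hlSlope d p f y) (hlCoeff p t)) := by
  rw [hlDPlus, iSup_limsup_seq_eq_limsup_comap (fun x => hlCost d p f t x y) _ (fun x => d x y),
    comap_hlCost_eq_map_affineMinFilter hp hS hQT ht htT, ← limsup_comp]
  rfl

lemma hlDMinus_eq_liminf (hp : 1 < p) (hS : (hlDomain d f y).Nonempty)
    (hQT : hlQ d p f T y ≠ ⊥) (ht : 0 < t) (htT : t ≤ T) :
    hlDMinus d p f y t = liminf (fun x : hlDomain d f y => d x y)
      (affineMinFilter (hlIntercept d f y) (hlSlope d p f y) (hlCoeff p t)) := by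
  rw [hlDMinus, iInf_liminf_seq_eq_liminf_comap (fun x => hlCost d p f t x y) _ (fun x => d x y),
    comap_hlCost_eq_map_affineMinFilter hp hS hQT ht htT, ← liminf_comp]
  rfl

lemma eventually_bddBelow_hlAffine (hp : 1 < p) (hQT : hlQ d p f T y ≠ ⊥) (ht : 0 < t)
    (htT : t < T) :
    ∀ᶠ c in 𝓝 (hlCoeff p t),
      BddBelow (range fun x => hlIntercept d f y x + hlSlope d p f y x * c) :=
  Filter.mem_of_superset (Ioi_mem_nhds (hlCoeff_strictAntiOn hp ht (ht.trans htT) htT)) fun _ hc =>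
    bddBelow_hlAffine (by linarith) (ht.trans htT) hQT (le_of_lt hc)

lemma exists_eventually_rpow_le (hp : 1 < p) (hQT : hlQ d p f T y ≠ ⊥) (ht : 0 < t)
    (htT : t < T) : ∃ C ≠ ⊤, ∀ᶠ x : hlDomain d f y in
      affineMinFilter (hlIntercept d f y) (hlSlope d p f y) (hlCoeff p t), d x y ^ p ≤ C := by
  obtain ⟨M, hM⟩ :=
    isBoundedUnder_le_affineMinFilter (eventually_bddBelow_hlAffine hp hQT ht htT)
  refine ⟨ENNReal.ofReal M, ENNReal.ofReal_ne_top, (eventually_map.1 hM).mono fun x hx => ?_⟩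
  rw [← ENNReal.ofReal_toReal x.2.2, ENNReal.ofReal_rpow_of_nonneg ENNReal.toReal_nonneg
    (by linarith)]
  exact ENNReal.ofReal_le_ofReal hx

lemma hlDPlus_ne_top (hp : 1 < p) (hS : (hlDomain d f y).Nonempty) (hQT : hlQ d p f T y ≠ ⊥)
    (ht : 0 < t) (htT : t < T) : hlDPlus d p f y t ≠ ⊤ := by
  have := hS.to_subtype
  have := affineMinFilter_neBot (eventually_bddBelow_hlAffine hp hQT ht htT).self_of_nhds
  obtain ⟨C, hC, hle⟩ := exists_eventually_rpow_le hp hQT ht htT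
  rw [hlDPlus_eq_limsup hp hS hQT ht htT.le]
  exact limsup_ne_top_of_eventually_rpow_le (by linarith) hC hle

lemma hlDMinus_ne_top (hp : 1 < p) (hS : (hlDomain d f y).Nonempty) (hQT : hlQ d p f T y ≠ ⊥)
    (ht : 0 < t) (htT : t < T) : hlDMinus d p f y t ≠ ⊤ := by
  have := hS.to_subtype
  have := affineMinFilter_neBot (eventually_bddBelow_hlAffine hp hQT ht htT).self_of_nhds
  refine ne_top_of_le_ne_top (hlDPlus_ne_top hp hS hQT ht htT) ?_
  rw [hlDMinus_eq_liminf hp hS hQT ht htT.le, hlDPlus_eq_limsup hp hS hQT ht htT.le]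
  exact liminf_le_limsup

lemma toReal_hlDPlus_rpow (hp : 1 < p) (hS : (hlDomain d f y).Nonempty)
    (hQT : hlQ d p f T y ≠ ⊥) (ht : 0 < t) (htT : t < T) :
    (hlDPlus d p f y t).toReal ^ p = limsup (hlSlope d p f y)
      (affineMinFilter (hlIntercept d f y) (hlSlope d p f y) (hlCoeff p t)) := by
  have := hS.to_subtype
  have := affineMinFilter_neBot (eventually_bddBelow_hlAffine hp hQT ht htT).self_of_nhds
  obtain ⟨C, hC, hle⟩ := exists_eventually_rpow_le hp hQT ht htT
  rw [hlDPlus_eq_limsup hp hS hQT ht htT.le]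
  exact toReal_limsup_rpow (by linarith) hC hle

lemma toReal_hlDMinus_rpow (hp : 1 < p) (hS : (hlDomain d f y).Nonempty)
    (hQT : hlQ d p f T y ≠ ⊥) (ht : 0 < t) (htT : t < T) :
    (hlDMinus d p f y t).toReal ^ p = liminf (hlSlope d p f y)
      (affineMinFilter (hlIntercept d f y) (hlSlope d p f y) (hlCoeff p t)) := by
  have := hS.to_subtype
  have := affineMinFilter_neBot (eventually_bddBelow_hlAffine hp hQT ht htT).self_of_nhds
  obtain ⟨C, hC, hle⟩ := exists_eventually_rpow_le hp hQT ht htT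
  rw [hlDMinus_eq_liminf hp hS hQT ht htT.le]
  exact toReal_liminf_rpow (by linarith) hC hle

lemma hasDerivWithinAt_hlQ_Iio (hp : 1 < p) (hS : (hlDomain d f y).Nonempty)
    (hQT : hlQ d p f T y ≠ ⊥) (ht : 0 < t) (htT : t < T) :
    HasDerivWithinAt (fun s => (hlQ d p f s y).toReal)
      ((hlDMinus d p f y t).toReal ^ p * (-(1 - 1 / p) / t ^ p)) (Iio t) t := by
  have := hS.to_subtype
  have hmaps : MapsTo (hlCoeff p) (Ioo 0 t) (Ioi (hlCoeff p t)) := fun s hs =>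
    hlCoeff_strictAntiOn hp hs.1 ht hs.2
  rw [toReal_hlDMinus_rpow hp hS hQT ht htT]
  refine (((hasDerivWithinAt_affineInf_Ioi (eventually_bddBelow_hlAffine hp hQT ht htT)).comp t
    (hasDerivAt_hlCoeff (by linarith) ht).hasDerivWithinAt hmaps).mono_of_mem_nhdsWithin
    (Ioo_mem_nhdsLT ht)).congr_of_eventuallyEq ?_ ?_
  · filter_upwards [Ioo_mem_nhdsLT ht] with s hs
    rw [hlQ_eq_coe_affineInf hp hS hQT hs.1 (hs.2.trans htT).le, EReal.toReal_coe]
    rfl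
  · rw [hlQ_eq_coe_affineInf hp hS hQT ht htT.le, EReal.toReal_coe]
    rfl

lemma hasDerivWithinAt_hlQ_Ioi (hp : 1 < p) (hS : (hlDomain d f y).Nonempty)
    (hQT : hlQ d p f T y ≠ ⊥) (ht : 0 < t) (htT : t < T) :
    HasDerivWithinAt (fun s => (hlQ d p f s y).toReal)
      ((hlDPlus d p f y t).toReal ^ p * (-(1 - 1 / p) / t ^ p)) (Ioi t) t := by
  have := hS.to_subtype
  have hmaps : MapsTo (hlCoeff p) (Ioo t T) (Iio (hlCoeff p t)) := fun s hs =>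
    hlCoeff_strictAntiOn hp ht (ht.trans hs.1) hs.1
  rw [toReal_hlDPlus_rpow hp hS hQT ht htT]
  refine (((hasDerivWithinAt_affineInf_Iio (eventually_bddBelow_hlAffine hp hQT ht htT)).comp t
    (hasDerivAt_hlCoeff (by linarith) ht).hasDerivWithinAt hmaps).mono_of_mem_nhdsWithin
    (Ioo_mem_nhdsGT htT)).congr_of_eventuallyEq ?_ ?_
  · filter_upwards [Ioo_mem_nhdsGT htT] with s hs
    rw [hlQ_eq_coe_affineInf hp hS hQT (ht.trans hs.1) hs.2.le, EReal.toReal_coe]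
    rfl
  · rw [hlQ_eq_coe_affineInf hp hS hQT ht htT.le, EReal.toReal_coe]
    rfl

lemma exists_lipschitzOnWith_hlQ (hp : 1 < p) (hS : (hlDomain d f y).Nonempty)
    (hQT : hlQ d p f T y ≠ ⊥) {a b : ℝ} (ha : 0 < a) (hab : a ≤ b) (hbT : b < T) :
    ∃ K, LipschitzOnWith K (fun s => (hlQ d p f s y).toReal) (Icc a b) := by
  have := hS.to_subtype
  have hT : 0 < T := by linarith
  have hanti := (hlCoeff_strictAntiOn hp).antitoneOn
  obtain ⟨K₁, hg⟩ : ∃ K, LipschitzOnWith K (affineInf (hlIntercept d f y) (hlSlope d p f y))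
      (Icc (hlCoeff p b) (hlCoeff p a)) :=
    (((concaveOn_affineInf (convex_Ioi (hlCoeff p T)) fun _ hc =>
      bddBelow_hlAffine (by linarith) hT hQT (le_of_lt hc)).locallyLipschitzOn
      isOpen_Ioi).mono ((Icc_subset_Ioi_iff (hanti ha (ha.trans_le hab) hab)).2
      (hlCoeff_strictAntiOn hp (ha.trans_le hab) hT hbT))).exists_lipschitzOnWith_of_compact
      isCompact_Icc
  obtain ⟨K₂, hc⟩ := (contDiffOn_hlCoeff (p := p) (by linarith) ha).exists_lipschitzOnWith
    one_ne_zero (convex_Icc a b) isCompact_Icc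
  have hmaps : MapsTo (hlCoeff p) (Icc a b) (Icc (hlCoeff p b) (hlCoeff p a)) := fun s hs =>
    ⟨hanti (ha.trans_le hs.1) (ha.trans_le hab) hs.2, hanti ha (ha.trans_le hs.1) hs.1⟩
  have hQ : EqOn (fun s => (hlQ d p f s y).toReal)
      (affineInf (hlIntercept d f y) (hlSlope d p f y) ∘ hlCoeff p) (Icc a b) := fun s hs => by
    simp only [Function.comp_apply]
    rw [hlQ_eq_coe_affineInf hp hS hQT (ha.trans_le hs.1) (hs.2.trans hbT.le), EReal.toReal_coe]
  refine ⟨K₁ * K₂, fun s hs s' hs' => ?_⟩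
  rw [hQ hs, hQ hs']
  exact hg.comp hc hmaps hs hs'

end HopfLax

theorem stmt_17_general {X : Type*} (d : X → X → ENNReal)
    (p q : ℝ) (hp : 1 < p) (hq : 1 / p + 1 / q = 1)
    (f : X → EReal)
    (y : X) (hyD : ∃ x, f x ≠ ⊤ ∧ d x y ≠ ⊤) :
    (∀ a b : ℝ, 0 < a → a ≤ b → (∃ T : ℝ, b < T ∧ hlQ d p f T y ≠ ⊥) →
      ∃ K : NNReal, LipschitzOnWith K (fun t => (hlQ d p f t y).toReal) (Set.Icc a b)) ∧
    (∀ t : ℝ, 0 < t → (∃ T : ℝ, t < T ∧ hlQ d p f T y ≠ ⊥) →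
      Tendsto (fun s => ((hlQ d p f s y).toReal - (hlQ d p f t y).toReal) / (s - t))
        (nhdsWithin t (Set.Iio t))
        (nhds (-(1 / q) * (hlDMinus d p f y t).toReal ^ p / t ^ p)) ∧
      Tendsto (fun s => ((hlQ d p f s y).toReal - (hlQ d p f t y).toReal) / (s - t))
        (nhdsWithin t (Set.Ioi t))
        (nhds (-(1 / q) * (hlDPlus d p f y t).toReal ^ p / t ^ p)) ∧
      ((∃ L : ℝ, HasDerivAt (fun s => (hlQ d p f s y).toReal) L t) ↔
        hlDMinus d p f y t = hlDPlus d p f y t)) := by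
  have hS : (hlDomain d f y).Nonempty := hyD
  refine ⟨fun a b ha hab ⟨T, hbT, hQT⟩ => exists_lipschitzOnWith_hlQ hp hS hQT ha hab hbT,
    fun t ht ⟨T, htT, hQT⟩ => ?_⟩
  have hderiv (δ : ℝ) : δ ^ p * (-(1 - 1 / p) / t ^ p) = -(1 / q) * δ ^ p / t ^ p := by
    rw [show 1 - 1 / p = 1 / q by linarith]
    ring
  have hl := hasDerivWithinAt_hlQ_Iio hp hS hQT ht htT
  have hr := hasDerivWithinAt_hlQ_Ioi hp hS hQT ht htT
  rw [hderiv] at hl hr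
  have hslope : slope (fun s => (hlQ d p f s y).toReal) t =
      fun s => ((hlQ d p f s y).toReal - (hlQ d p f t y).toReal) / (s - t) :=
    funext fun s => slope_def_field _ t s
  refine ⟨hslope ▸ (hasDerivWithinAt_iff_tendsto_slope' self_notMem_Iio).1 hl,
    hslope ▸ (hasDerivWithinAt_iff_tendsto_slope' self_notMem_Ioi).1 hr, ?_⟩
  have hq0 : -(1 / q) ≠ 0 := by
    have : 1 / p < 1 := (div_lt_one (by linarith)).2 hp
    intro h
    linarith
  rw [exists_hasDerivAt_iff_eq hl hr, div_left_inj' (Real.rpow_pos_of_pos ht p).ne',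
    mul_right_inj' hq0, Real.rpow_left_inj ENNReal.toReal_nonneg ENNReal.toReal_nonneg
    (by linarith), ENNReal.toReal_eq_toReal_iff' (hlDMinus_ne_top hp hS hQT ht htT)
    (hlDPlus_ne_top hp hS hQT ht htT)]

/-- time derivative of the Hopf–Lax semigroup in the asymmetric setting:
for every `y ∈ 𝒟(f)`, `t ↦ Q_t f(y)` is locally Lipschitz on `(0, t_*(y))`, its one-sided
derivatives satisfy `d/dt⁻ Q_t f(y) = −(1/q) 𝔡⁻(y,t)^p/t^p` and
`d/dt⁺ Q_t f(y) = −(1/q) 𝔡⁺(y,t)^p/t^p` (with `1/p + 1/q = 1`), and `t ↦ Q_t f(y)` is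
differentiable at `t` iff `𝔡⁻(y,t) = 𝔡⁺(y,t)`.
(Here `t < t_*(y)` is expressed as `∃ T > t, Q_T f(y) ≠ −∞`.) -/
theorem stmt_17 {X : Type*} [TopologicalSpace X] (d : X → X → ENNReal)
    (hX : IsForwardExtendedPolish X d) (p q : ℝ) (hp : 1 < p) (hq : 1 / p + 1 / q = 1)
    (f : X → EReal) (hfbot : ∀ x, f x ≠ ⊥) (hfprop : ∃ x, f x ≠ ⊤)
    (y : X) (hyD : ∃ x, f x ≠ ⊤ ∧ d x y ≠ ⊤) :
    (∀ a b : ℝ, 0 < a → a ≤ b → (∃ T : ℝ, b < T ∧ hlQ d p f T y ≠ ⊥) →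
      ∃ K : NNReal, LipschitzOnWith K (fun t => (hlQ d p f t y).toReal) (Set.Icc a b)) ∧
    (∀ t : ℝ, 0 < t → (∃ T : ℝ, t < T ∧ hlQ d p f T y ≠ ⊥) →
      Tendsto (fun s => ((hlQ d p f s y).toReal - (hlQ d p f t y).toReal) / (s - t))
        (nhdsWithin t (Set.Iio t))
        (nhds (-(1 / q) * (hlDMinus d p f y t).toReal ^ p / t ^ p)) ∧
      Tendsto (fun s => ((hlQ d p f s y).toReal - (hlQ d p f t y).toReal) / (s - t))
        (nhdsWithin t (Set.Ioi t))
        (nhds (-(1 / q) * (hlDPlus d p f y t).toReal ^ p / t ^ p)) ∧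
      ((∃ L : ℝ, HasDerivAt (fun s => (hlQ d p f s y).toReal) L t) ↔
        hlDMinus d p f y t = hlDPlus d p f y t)) :=
  stmt_17_general d p q hp hq f y hyD
end
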